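/- arXiv:2512.20101 — 7 statements merged into one kernel-verified Lean document; each statement's English description precedes it below -/
import Mathlib

section
/- Let H be a Hilbert space and a : H → H a bounded linear isometry. Set K = ⋂_{n≥0} range(a^n). Then the orthogonal complement K^⊥ is invariant under a. -/
/-!
Since `a` is injective, every `η ∈ K` is `a ζ` with `ζ ∈ K`: writing `η = a^(n+1) w` for each `n`
forces `ζ = a^n w`. Hence `K ⊆ a(K)`, so `a(Kᗮ) ⊆ (a K)ᗮ ⊆ Kᗮ`, the first inclusion because `a`
preserves inner products.
-/

open Submodule

theorem Module.End.iInf_range_pow_le_map {R M : Type*} [Semiring R] [AddCommMonoid M] [Module R M]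
    {f : Module.End R M} (hf : Function.Injective f) :
    ⨅ n : ℕ, LinearMap.range (f ^ n) ≤ (⨅ n : ℕ, LinearMap.range (f ^ n)).map f := by
  intro η hη
  simp only [mem_iInf] at hη
  obtain ⟨ζ, rfl⟩ : η ∈ LinearMap.range f := by simpa using hη 1
  refine mem_map_of_mem (mem_iInf _ |>.mpr fun n => ?_)
  obtain ⟨w, hw⟩ := hη (n + 1)
  exact ⟨w, hf (by rwa [pow_succ', Module.End.mul_apply] at hw)⟩

theorem Submodule.map_orthogonal_le_orthogonal_of_le_map {𝕜 E : Type*} [RCLike 𝕜]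
    [NormedAddCommGroup E] [InnerProductSpace 𝕜 E] {K : Submodule 𝕜 E} (f : E →ₗᵢ[𝕜] E)
    (hK : K ≤ K.map f.toLinearMap) : Kᗮ.map f.toLinearMap ≤ Kᗮ :=
  calc Kᗮ.map f.toLinearMap = (K.map f.toLinearMap)ᗮ ⊓ f.range := map_orthogonal K f
    _ ≤ (K.map f.toLinearMap)ᗮ := inf_le_left
    _ ≤ Kᗮ := orthogonal_le hK

theorem wold_complement_invariant_general {H : Type*} [NormedAddCommGroup H] [InnerProductSpace ℂ H]
    (a : H →L[ℂ] H) (ha : ∀ ξ : H, ‖a ξ‖ = ‖ξ‖) :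
    ∀ ξ ∈ (⨅ n : ℕ, LinearMap.range ((a ^ n : H →L[ℂ] H) : H →ₗ[ℂ] H))ᗮ,
      a ξ ∈ (⨅ n : ℕ, LinearMap.range ((a ^ n : H →L[ℂ] H) : H →ₗ[ℂ] H))ᗮ := by
  let li : H →ₗᵢ[ℂ] H := ⟨a, ha⟩
  have hpow (n : ℕ) : ((a ^ n : H →L[ℂ] H) : H →ₗ[ℂ] H) = li.toLinearMap ^ n :=
    ContinuousLinearMap.toLinearMap_pow a n
  simp only [hpow]
  exact fun ξ hξ => map_orthogonal_le_orthogonal_of_le_map li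
    (Module.End.iInf_range_pow_le_map li.injective) (mem_map_of_mem hξ)

/-- Wold decomposition, part (ii): for an isometry `a` on a Hilbert space `H`,
the orthogonal complement of `K = ⋂ₙ range (aⁿ)` is invariant under `a`. -/
theorem wold_complement_invariant {H : Type*} [NormedAddCommGroup H] [InnerProductSpace ℂ H]
    [CompleteSpace H] (a : H →L[ℂ] H) (ha : ∀ ξ : H, ‖a ξ‖ = ‖ξ‖) :
    ∀ ξ ∈ (⨅ n : ℕ, LinearMap.range ((a ^ n : H →L[ℂ] H) : H →ₗ[ℂ] H))ᗮ,
      a ξ ∈ (⨅ n : ℕ, LinearMap.range ((a ^ n : H →L[ℂ] H) : H →ₗ[ℂ] H))ᗮ :=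
  wold_complement_invariant_general a ha
end

section
/- Let H be a Hilbert space, a an isometry on H, R = (range a)^⊥, and K = ⋂_{n≥0} range(a^n). Then K^⊥ equals the closure of the orthogonal direct sum ⊕_{n≥0} a^n(R); equivalently, a vector ξ lies in K if and only if ξ is orthogonal to a^n(θ) for every θ ∈ R and every n ≥ 0. -/
/-!
Since `a` preserves inner products, for `ξ = aⁿ η` the condition `ξ ⟂ aⁿ(R)` says exactly
`η ⟂ R`, i.e. `η ∈ Rᗮ = (range a)ᗮᗮ = range a` (the range of an isometry is closed), i.e.
`ξ ∈ range aⁿ⁺¹`. By induction on `n`, `K` is therefore the orthogonal complement of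
`⨆ₙ aⁿ(R)`, and taking complements once more gives the closure of that sum.
-/

open Submodule

section

variable {𝕜 E : Type*} [RCLike 𝕜] [NormedAddCommGroup E] [InnerProductSpace 𝕜 E]

local notation "⟪" x ", " y "⟫" => inner 𝕜 x y

theorem Submodule.mem_orthogonal_map_iff {F : Type*} [NormedAddCommGroup F]
    [InnerProductSpace 𝕜 F] (f : E →ₗ[𝕜] F) (K : Submodule 𝕜 E) (v : F) :
    v ∈ (K.map f)ᗮ ↔ ∀ u ∈ K, ⟪v, f u⟫ = 0 := by
  simp only [mem_orthogonal', mem_map, forall_exists_index, and_imp, forall_apply_eq_imp_iff₂]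

namespace ContinuousLinearMap

variable {a : E →L[𝕜] E}

theorem norm_pow_apply_of_norm_map (ha : ∀ x, ‖a x‖ = ‖x‖) (n : ℕ)
    (x : E) : ‖(a ^ n) x‖ = ‖x‖ := by
  induction n generalizing x with
  | zero => simp
  | succ n ih => rw [pow_succ, mul_apply_eq_comp, ih, ha]

theorem inner_pow_apply_pow_apply_of_norm_map (ha : ∀ x, ‖a x‖ = ‖x‖)
    (n : ℕ) (x y : E) : ⟪(a ^ n) x, (a ^ n) y⟫ = ⟪x, y⟫ :=
  (LinearMap.norm_map_iff_inner_map_map (a ^ n)).mp (norm_pow_apply_of_norm_map ha n) x y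

theorem completeSpace_range_of_norm_map [CompleteSpace E]
    (ha : ∀ x, ‖a x‖ = ‖x‖) : CompleteSpace (LinearMap.range (a : E →ₗ[𝕜] E)) := by
  have h := (AddMonoidHomClass.isometry_of_norm a ha).isUniformInducing.isComplete_range
  rw [← coe_coe, ← LinearMap.coe_range] at h
  exact h.completeSpace_coe

theorem pow_apply_mem_orthogonal_map_pow_iff [CompleteSpace E]
    (ha : ∀ x, ‖a x‖ = ‖x‖) (n : ℕ) (η : E) :
    (a ^ n) η ∈ (map ((a ^ n : E →L[𝕜] E) : E →ₗ[𝕜] E) (LinearMap.range (a : E →ₗ[𝕜] E))ᗮ)ᗮ ↔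
      η ∈ LinearMap.range (a : E →ₗ[𝕜] E) := by
  have := completeSpace_range_of_norm_map ha
  rw [mem_orthogonal_map_iff]
  conv_rhs => rw [← orthogonal_orthogonal (LinearMap.range (a : E →ₗ[𝕜] E)), mem_orthogonal']
  simp only [coe_coe, inner_pow_apply_pow_apply_of_norm_map ha]

theorem mem_iInf_range_pow_iff [CompleteSpace E] (ha : ∀ x, ‖a x‖ = ‖x‖)
    (ξ : E) :
    ξ ∈ ⨅ n : ℕ, LinearMap.range ((a ^ n : E →L[𝕜] E) : E →ₗ[𝕜] E) ↔
      ∀ n : ℕ, ξ ∈ (map ((a ^ n : E →L[𝕜] E) : E →ₗ[𝕜] E) (LinearMap.range (a : E →ₗ[𝕜] E))ᗮ)ᗮ := by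
  simp only [mem_iInf]
  constructor
  · intro hξ n
    obtain ⟨η, rfl⟩ := hξ (n + 1)
    rw [coe_coe, pow_succ, mul_apply_eq_comp,
      pow_apply_mem_orthogonal_map_pow_iff ha]
    exact LinearMap.mem_range_self _ η
  · intro hξ n
    induction n with
    | zero => simp
    | succ n ih =>
      obtain ⟨η, rfl⟩ := ih
      obtain ⟨ζ, rfl⟩ := (pow_apply_mem_orthogonal_map_pow_iff ha n η).mp (hξ n)
      exact ⟨ζ, by simp [pow_succ]⟩

theorem iInf_range_pow_eq_orthogonal_iSup [CompleteSpace E] (ha : ∀ x, ‖a x‖ = ‖x‖) :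
    ⨅ n : ℕ, LinearMap.range ((a ^ n : E →L[𝕜] E) : E →ₗ[𝕜] E) =
      (⨆ n : ℕ, map ((a ^ n : E →L[𝕜] E) : E →ₗ[𝕜] E) (LinearMap.range (a : E →ₗ[𝕜] E))ᗮ)ᗮ := by
  ext ξ
  rw [mem_iInf_range_pow_iff ha, ← iInf_orthogonal, mem_iInf]

end ContinuousLinearMap

end

/-- Wold decomposition, part (iii), second half: for an isometry `a` on a Hilbert space `H`,
with `R = (range a)ᗮ` and `K = ⋂ₙ range (aⁿ)`, the complement `Kᗮ` is the closure of the
(orthogonal) direct sum `⊕ₙ aⁿ(R)`; equivalently, `ξ ∈ K` iff `ξ ⟂ aⁿ(θ)` for every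
`θ ∈ R` and every `n ≥ 0`. -/
theorem wold_complement_eq_shift_part {H : Type*} [NormedAddCommGroup H]
    [InnerProductSpace ℂ H] [CompleteSpace H] (a : H →L[ℂ] H)
    (ha : ∀ ξ : H, ‖a ξ‖ = ‖ξ‖) :
    (⨅ n : ℕ, LinearMap.range ((a ^ n : H →L[ℂ] H) : H →ₗ[ℂ] H))ᗮ =
      (⨆ n : ℕ, Submodule.map ((a ^ n : H →L[ℂ] H) : H →ₗ[ℂ] H) (LinearMap.range (a : H →ₗ[ℂ] H))ᗮ).topologicalClosure ∧
    (∀ ξ : H, ξ ∈ (⨅ n : ℕ, LinearMap.range ((a ^ n : H →L[ℂ] H) : H →ₗ[ℂ] H)) ↔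
      ∀ θ ∈ (LinearMap.range (a : H →ₗ[ℂ] H))ᗮ, ∀ n : ℕ, (inner ℂ ξ ((a ^ n) θ) : ℂ) = 0) := by
  refine ⟨by rw [a.iInf_range_pow_eq_orthogonal_iSup ha, orthogonal_orthogonal_eq_closure],
    fun ξ => ?_⟩
  simp only [a.mem_iInf_range_pow_iff ha, mem_orthogonal_map_iff, ContinuousLinearMap.coe_coe]
  exact ⟨fun h θ hθ n => h n θ hθ, fun h n θ hθ => h θ hθ n⟩
end

section
/- Let a and b be isometries on a Hilbert space H that are similar, i.e., b = t a t⁻¹ for some invertible bounded operator t on H. Then a and b are unitarily equivalent: there exists a unitary u on H with b = u a u*. -/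
set_option synthInstance.maxHeartbeats 1000000
set_option maxHeartbeats 1000000
set_option linter.unusedSectionVars false

namespace SimIsoAux

open Filter ContinuousLinearMap

variable {H : Type*} [NormedAddCommGroup H] [InnerProductSpace ℂ H] [CompleteSpace H]

local notation "𝔹" => H →L[ℂ] H
local notation "⟪" x ", " y "⟫" => @inner ℂ _ _ x y

lemma inner_star_left (A : H →L[ℂ] H) (x y : H) : ⟪(star A) x, y⟫ = ⟪x, A y⟫ := by
  rw [ContinuousLinearMap.star_eq_adjoint]
  exact ContinuousLinearMap.adjoint_inner_left A y x

lemma inner_star_right (A : H →L[ℂ] H) (x y : H) : ⟪x, (star A) y⟫ = ⟪A x, y⟫ := by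
  rw [ContinuousLinearMap.star_eq_adjoint]
  exact ContinuousLinearMap.adjoint_inner_right A x y

lemma exists_strong_limit (T : ℕ → 𝔹) (hc : ∀ x, CauchySeq fun n => T n x)
    (hbd : ∀ n x, ‖T n x‖ ≤ ‖x‖) :
    ∃ L : 𝔹, ∀ x, Tendsto (fun n => T n x) atTop (nhds (L x)) := by
  have hlim : ∀ x : H, ∃ y, Tendsto (fun n => T n x) atTop (nhds y) :=
    fun x => cauchySeq_tendsto_of_complete (hc x)
  choose f hf using hlim
  have hadd : ∀ x y, f (x + y) = f x + f y := by
    intro x y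
    refine tendsto_nhds_unique ?_ ((hf x).add (hf y))
    simpa [map_add] using hf (x + y)
  have hsmul : ∀ (c : ℂ) (x), f (c • x) = c • f x := by
    intro c x
    refine tendsto_nhds_unique ?_ ((hf x).const_smul c)
    simpa [map_smul] using hf (c • x)
  have hnorm : ∀ x, ‖f x‖ ≤ 1 * ‖x‖ := by
    intro x
    rw [one_mul]
    exact le_of_tendsto (hf x).norm (Eventually.of_forall fun n => hbd n x)
  exact ⟨LinearMap.mkContinuous ⟨⟨f, hadd⟩, hsmul⟩ 1 hnorm, hf⟩

lemma cauchySeq_of_sq_diff (u : ℕ → H) (c : ℕ → ℝ) (hmono : Antitone c)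
    (hpos : ∀ n, 0 ≤ c n)
    (hdiff : ∀ m n, m ≤ n → ‖u n - u m‖ ^ 2 = c m - c n) : CauchySeq u := by
  have hcc : CauchySeq c := by
    obtain ⟨l, hl⟩ : ∃ l, Tendsto c atTop (nhds l) :=
      ⟨_, tendsto_atTop_ciInf hmono ⟨0, fun x hx => by obtain ⟨n, rfl⟩ := hx; exact hpos n⟩⟩
    exact hl.cauchySeq
  rw [Metric.cauchySeq_iff] at hcc ⊢
  intro ε hε
  obtain ⟨N, hN⟩ := hcc (ε ^ 2) (by positivity)
  refine ⟨N, fun m hm n hn => ?_⟩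
  wlog h : n ≤ m generalizing m n
  · rw [dist_comm]; exact this n hn m hm (le_of_not_ge h)
  have h1 := hdiff n m h
  have hd := hN m hm n hn
  rw [Real.dist_eq] at hd
  have h2 : ‖u m - u n‖ ^ 2 < ε ^ 2 := by
    rw [h1]
    calc c n - c m ≤ |c m - c n| := by rw [abs_sub_comm]; exact le_abs_self _
      _ < ε ^ 2 := hd
  have h3 : ‖u m - u n‖ < ε := by nlinarith [norm_nonneg (u m - u n)]
  rw [dist_eq_norm]; exact h3

section iso
variable {a : H →L[ℂ] H} (ha : star a * a = 1)
include ha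

lemma star_pow_mul_pow (n : ℕ) : star (a ^ n) * a ^ n = 1 := by
  induction n with
  | zero => simp
  | succ n ih =>
    rw [pow_succ', star_mul, mul_assoc, ← mul_assoc (star a), ha, one_mul, ih]

lemma star_pow_mul_pow_add (m k : ℕ) : star (a ^ m) * a ^ (m + k) = a ^ k := by
  rw [pow_add, ← mul_assoc, star_pow_mul_pow ha, one_mul]

lemma iso_norm_apply (x : H) : ‖a x‖ = ‖x‖ := by
  have h : ⟪a x, a x⟫ = ⟪x, x⟫ := by
    rw [← inner_star_right a x (a x), ← ContinuousLinearMap.mul_apply, ha,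
      ContinuousLinearMap.one_apply]
  have h3 : ‖a x‖ ^ 2 = ‖x‖ ^ 2 := by
    rw [← inner_self_eq_norm_sq (𝕜 := ℂ), ← inner_self_eq_norm_sq (𝕜 := ℂ), h]
  nlinarith [norm_nonneg (a x), norm_nonneg x]

lemma iso_star_norm_le (x : H) : ‖(star a) x‖ ≤ ‖x‖ := by
  set z := (star a) x with hz
  have h : ⟪z, z⟫ = ⟪x, a z⟫ := by rw [hz]; exact inner_star_left a x z
  have h2 : ‖z‖ ^ 2 ≤ ‖x‖ * ‖z‖ := by
    have hn := norm_inner_le_norm (𝕜 := ℂ) x (a z)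
    rw [← h] at hn
    calc ‖z‖ ^ 2 = RCLike.re ⟪z, z⟫ := (inner_self_eq_norm_sq (𝕜 := ℂ) z).symm
      _ ≤ ‖⟪z, z⟫‖ := RCLike.re_le_norm _
      _ ≤ ‖x‖ * ‖a z‖ := hn
      _ = ‖x‖ * ‖z‖ := by rw [iso_norm_apply ha]
  rcases eq_or_lt_of_le (norm_nonneg z) with h0 | h0
  · rw [← h0]; exact norm_nonneg x
  · nlinarith

lemma iso_star_pow_norm_antitone (x : H) : Antitone fun n => ‖star (a ^ n) x‖ := by
  apply antitone_nat_of_succ_le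
  intro n
  have : star (a ^ (n + 1)) x = (star a) ((star (a ^ n)) x) := by
    rw [pow_succ, star_mul, ContinuousLinearMap.mul_apply]
  rw [this]
  exact iso_star_norm_le ha _

lemma pn_mul_pn (m n : ℕ) (hmn : m ≤ n) :
    (a ^ m * star (a ^ m)) * (a ^ n * star (a ^ n)) = a ^ n * star (a ^ n) := by
  obtain ⟨k, rfl⟩ := Nat.exists_eq_add_of_le hmn
  calc a ^ m * star (a ^ m) * (a ^ (m + k) * star (a ^ (m + k)))
      = a ^ m * ((star (a ^ m) * a ^ (m + k)) * star (a ^ (m + k))) := by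
        rw [mul_assoc, mul_assoc]
    _ = a ^ m * (a ^ k * star (a ^ (m + k))) := by rw [star_pow_mul_pow_add ha]
    _ = a ^ (m + k) * star (a ^ (m + k)) := by rw [← mul_assoc, ← pow_add]

lemma pn_inner (n : ℕ) (x y : H) :
    ⟪(a ^ n * star (a ^ n)) x, y⟫ = ⟪(star (a ^ n)) x, (star (a ^ n)) y⟫ := by
  rw [ContinuousLinearMap.mul_apply]
  nth_rewrite 1 [show a ^ n = star (star (a ^ n)) from (star_star _).symm]
  rw [inner_star_left]

lemma pn_norm_sq (n : ℕ) (x : H) :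
    ‖(a ^ n * star (a ^ n)) x‖ = ‖(star (a ^ n)) x‖ := by
  rw [ContinuousLinearMap.mul_apply]
  exact iso_norm_apply (star_pow_mul_pow ha n) _

/-- The strong limit `E` of `aⁿ (a*)ⁿ`. -/
lemma exists_E : ∃ E : 𝔹, ∀ x, Tendsto (fun n => (a ^ n * star (a ^ n)) x) atTop (nhds (E x)) := by
  set p : ℕ → 𝔹 := fun n => a ^ n * star (a ^ n) with hp
  have hbd : ∀ n (x : H), ‖p n x‖ ≤ ‖x‖ := by
    intro n x
    rw [hp, pn_norm_sq ha]
    have h0 : ‖star (a ^ 0) x‖ = ‖x‖ := by simp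
    rw [← h0]
    exact iso_star_pow_norm_antitone ha x (Nat.zero_le n)
  apply exists_strong_limit p _ hbd
  intro x
  apply cauchySeq_of_sq_diff (fun n => p n x) (fun n => ‖star (a ^ n) x‖ ^ 2)
  · intro m n hmn
    exact pow_le_pow_left₀ (norm_nonneg _) (iso_star_pow_norm_antitone ha x hmn) 2
  · intro n; positivity
  · intro m n hmn
    have hre : ‖p n x - p m x‖ ^ 2
        = ‖p n x‖ ^ 2 - 2 * RCLike.re ⟪p n x, p m x⟫ + ‖p m x‖ ^ 2 :=
      norm_sub_sq (𝕜 := ℂ) _ _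
    have h3 : ⟪p n x, p m x⟫ = (⟪p n x, x⟫ : ℂ) := by
      have hpm_sa : star (p m) = p m := by simp [hp, star_mul]
      have hpmm : p m * p n = p n := pn_mul_pn ha m n hmn
      calc ⟪p n x, p m x⟫ = ⟪p n x, (star (p m)) x⟫ := by rw [hpm_sa]
        _ = ⟪(p m) (p n x), x⟫ := inner_star_right _ _ _
        _ = ⟪(p m * p n) x, x⟫ := rfl
        _ = ⟪p n x, x⟫ := by rw [hpmm]
    have h4 : RCLike.re (⟪p n x, x⟫ : ℂ) = ‖star (a ^ n) x‖ ^ 2 := by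
      rw [hp, pn_inner ha, inner_self_eq_norm_sq (𝕜 := ℂ)]
    rw [hre, h3, h4, hp, pn_norm_sq ha, pn_norm_sq ha]
    ring

end iso

section Eprops

variable {a E : H →L[ℂ] H} (ha : star a * a = 1)
    (hE : ∀ x, Tendsto (fun n => (a ^ n * star (a ^ n)) x) atTop (nhds (E x)))
include ha hE

lemma E_fixed (m : ℕ) (x : H) : (a ^ m * star (a ^ m)) (E x) = E x := by
  have h1 : Tendsto (fun n => (a ^ m * star (a ^ m)) ((a ^ n * star (a ^ n)) x)) atTop
      (nhds ((a ^ m * star (a ^ m)) (E x))) :=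
    ((a ^ m * star (a ^ m)).continuous.tendsto _).comp (hE x)
  have h2 : Tendsto (fun n => (a ^ m * star (a ^ m)) ((a ^ n * star (a ^ n)) x)) atTop
      (nhds (E x)) := by
    apply (hE x).congr'
    filter_upwards [eventually_ge_atTop m] with n hn
    rw [← ContinuousLinearMap.mul_apply, pn_mul_pn ha m n hn]
  exact tendsto_nhds_unique h1 h2

lemma E_idem : E * E = E := by
  ext x
  rw [ContinuousLinearMap.mul_apply]
  have h1 : Tendsto (fun n => (a ^ n * star (a ^ n)) (E x)) atTop (nhds (E (E x))) := hE (E x)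
  have h2 : Tendsto (fun n => (a ^ n * star (a ^ n)) (E x)) atTop (nhds (E x)) := by
    simp only [E_fixed ha hE]
    exact tendsto_const_nhds
  exact tendsto_nhds_unique h1 h2

lemma E_sa : star E = E := by
  have key : ∀ x y : H, ⟪E x, y⟫ = ⟪x, E y⟫ := by
    intro x y
    have h1 : Tendsto (fun n => ⟪(a ^ n * star (a ^ n)) x, y⟫) atTop (nhds ⟪E x, y⟫) :=
      (hE x).inner tendsto_const_nhds
    have h2 : Tendsto (fun n => ⟪(a ^ n * star (a ^ n)) x, y⟫) atTop (nhds ⟪x, E y⟫) := by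
      have : ∀ n, ⟪(a ^ n * star (a ^ n)) x, y⟫ = ⟪x, (a ^ n * star (a ^ n)) y⟫ := by
        intro n
        have hsa : star (a ^ n * star (a ^ n)) = a ^ n * star (a ^ n) := by simp [star_mul]
        nth_rewrite 1 [← hsa]
        rw [inner_star_left]
      simp only [this]
      exact tendsto_const_nhds.inner (hE y)
    exact tendsto_nhds_unique h1 h2
  rw [ContinuousLinearMap.star_eq_adjoint]
  symm
  rw [ContinuousLinearMap.eq_adjoint_iff]
  exact key

lemma a_comm_E : a * E = E * a := by
  ext x
  rw [ContinuousLinearMap.mul_apply, ContinuousLinearMap.mul_apply]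
  have h1 : Tendsto (fun n => a ((a ^ n * star (a ^ n)) x)) atTop (nhds (a (E x))) :=
    (a.continuous.tendsto _).comp (hE x)
  have h2 : Tendsto (fun n => a ((a ^ n * star (a ^ n)) x)) atTop (nhds (E (a x))) := by
    have key : ∀ n, a ((a ^ n * star (a ^ n)) x) = (a ^ (n + 1) * star (a ^ (n + 1))) (a x) := by
      intro n
      rw [← ContinuousLinearMap.mul_apply, ← ContinuousLinearMap.mul_apply]
      congr 1
      have hstep : star (a ^ (n + 1)) * a = star (a ^ n) := by
        rw [pow_succ', star_mul, mul_assoc, ha, mul_one]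
      calc a * (a ^ n * star (a ^ n)) = a ^ (n + 1) * star (a ^ n) := by
            rw [← mul_assoc, ← pow_succ']
        _ = a ^ (n + 1) * (star (a ^ (n + 1)) * a) := by rw [hstep]
        _ = a ^ (n + 1) * star (a ^ (n + 1)) * a := by rw [mul_assoc]
    simp only [key]
    exact ((hE (a x)).comp (tendsto_add_atTop_nat 1))
  exact tendsto_nhds_unique h1 h2

lemma aa_star_E : a * star a * E = E := by
  ext x
  rw [ContinuousLinearMap.mul_apply]
  have h1 : Tendsto (fun n => (a * star a) ((a ^ n * star (a ^ n)) x)) atTop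
      (nhds ((a * star a) (E x))) := ((a * star a).continuous.tendsto _).comp (hE x)
  have h2 : Tendsto (fun n => (a * star a) ((a ^ n * star (a ^ n)) x)) atTop (nhds (E x)) := by
    apply (hE x).congr'
    filter_upwards [eventually_ge_atTop 1] with n hn
    rw [← ContinuousLinearMap.mul_apply]
    congr 1
    have : a * star a = a ^ 1 * star (a ^ 1) := by simp
    rw [this, pn_mul_pn ha 1 n hn]
  exact tendsto_nhds_unique h1 h2

end Eprops

section cross

variable {a b t E F : H →L[ℂ] H} (ha : star a * a = 1) (hb : star b * b = 1)
    (hbt : b * t = t * a)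
    (hE : ∀ x, Tendsto (fun n => (a ^ n * star (a ^ n)) x) atTop (nhds (E x)))
    (hF : ∀ x, Tendsto (fun n => (b ^ n * star (b ^ n)) x) atTop (nhds (F x)))
include hbt in
lemma bpow_t (n : ℕ) : b ^ n * t = t * a ^ n := by
  induction n with
  | zero => simp
  | succ n ih => rw [pow_succ, pow_succ, mul_assoc, hbt, ← mul_assoc, ih, mul_assoc]

include ha hb hbt hE hF in
lemma F_t_E : F * (t * E) = t * E := by
  have key : ∀ m n, m ≤ n → (b ^ m * star (b ^ m)) * (t * (a ^ n * star (a ^ n)))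
      = t * (a ^ n * star (a ^ n)) := by
    intro m n hmn
    have hproj : (b ^ m * star (b ^ m)) * b ^ n = b ^ n := by
      obtain ⟨k, rfl⟩ := Nat.exists_eq_add_of_le hmn
      rw [mul_assoc, star_pow_mul_pow_add hb, ← pow_add]
    have h1 : t * (a ^ n * star (a ^ n)) = b ^ n * (t * star (a ^ n)) := by
      rw [← mul_assoc, ← bpow_t hbt, mul_assoc]
    rw [h1, ← mul_assoc, hproj]
  ext x
  have step1 : ∀ m : ℕ, (b ^ m * star (b ^ m)) (t (E x)) = t (E x) := by
    intro m
    have h1 : Tendsto (fun n => ((b ^ m * star (b ^ m)) * t) ((a ^ n * star (a ^ n)) x)) atTop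
        (nhds (((b ^ m * star (b ^ m)) * t) (E x))) :=
      (((b ^ m * star (b ^ m)) * t).continuous.tendsto _).comp (hE x)
    have h2 : Tendsto (fun n => ((b ^ m * star (b ^ m)) * t) ((a ^ n * star (a ^ n)) x)) atTop
        (nhds (t (E x))) := by
      have h3 : Tendsto (fun n => t ((a ^ n * star (a ^ n)) x)) atTop (nhds (t (E x))) :=
        (t.continuous.tendsto _).comp (hE x)
      apply h3.congr'
      filter_upwards [eventually_ge_atTop m] with n hn
      calc t ((a ^ n * star (a ^ n)) x) = (t * (a ^ n * star (a ^ n))) x := rfl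
        _ = ((b ^ m * star (b ^ m)) * (t * (a ^ n * star (a ^ n)))) x := by
            rw [key m n hn]
        _ = ((b ^ m * star (b ^ m)) * t) ((a ^ n * star (a ^ n)) x) := by
            rw [mul_assoc]; rfl
    have := tendsto_nhds_unique h1 h2
    calc (b ^ m * star (b ^ m)) (t (E x)) = ((b ^ m * star (b ^ m)) * t) (E x) := rfl
      _ = t (E x) := this
  have h4 : Tendsto (fun m => (b ^ m * star (b ^ m)) (t (E x))) atTop (nhds (F (t (E x)))) :=
    hF (t (E x))
  have h5 : Tendsto (fun m => (b ^ m * star (b ^ m)) (t (E x))) atTop (nhds (t (E x))) := by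
    simp only [step1]; exact tendsto_const_nhds
  have h6 := tendsto_nhds_unique h4 h5
  calc (F * (t * E)) x = F (t (E x)) := rfl
    _ = t (E x) := h6
    _ = (t * E) x := rfl

end cross


section P4P5
open Finset

lemma commute_aeval (y z : H →L[ℂ] H) (hz : z * y = y * z) (p : Polynomial ℝ) :
    z * Polynomial.aeval y p = Polynomial.aeval y p * z := by
  induction p using Polynomial.induction_on with
  | C c => simp [Algebra.commutes, Polynomial.aeval_C, Algebra.algebraMap_eq_smul_one,
      mul_smul_comm, smul_mul_assoc]
  | add p q hp hq => simp [mul_add, add_mul, hp, hq]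
  | monomial n c ih =>
    have hzy : Commute z y := hz
    have : Commute z (Polynomial.aeval y (Polynomial.C c * Polynomial.X ^ (n + 1))) := by
      simp only [map_mul, map_pow, Polynomial.aeval_C, Polynomial.aeval_X]
      exact Commute.mul_right (Algebra.commute_algebraMap_right c z) (hzy.pow_right (n + 1))
    exact this

lemma commute_cfcHom (y z : H →L[ℂ] H) (hy : IsSelfAdjoint y) (hz : z * y = y * z)
    (g : C(spectrum ℝ y, ℝ)) : z * cfcHom hy g = cfcHom hy g * z := by
  have hcont : Continuous (cfcHom hy (R := ℝ)) := (cfcHom_isClosedEmbedding hy).continuous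
  set S : Set C(spectrum ℝ y, ℝ) := {g | z * cfcHom hy g = cfcHom hy g * z} with hS
  have hSclosed : IsClosed S := by
    have : S = (fun g => z * cfcHom hy g - cfcHom hy g * z) ⁻¹' {0} := by
      ext g; simp [hS, sub_eq_zero]
    rw [this]
    exact isClosed_singleton.preimage
      (((continuous_mul_left z).comp hcont).sub ((continuous_mul_right z).comp hcont))
  have hpolyX : cfcHom hy ((Polynomial.toContinuousMapOnAlgHom (spectrum ℝ y)) Polynomial.X) = y := by
    have : (Polynomial.toContinuousMapOnAlgHom (spectrum ℝ y)) Polynomial.X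
        = (ContinuousMap.id ℝ).restrict (spectrum ℝ y) := by
      ext w; simp
    rw [this, cfcHom_id hy]
  have haeval : ∀ p : Polynomial ℝ,
      cfcHom hy ((Polynomial.toContinuousMapOnAlgHom (spectrum ℝ y)) p) = Polynomial.aeval y p := by
    intro p
    have := Polynomial.algHom_ext (R := ℝ)
      (f := ((cfcHom hy (R := ℝ)).toAlgHom).comp (Polynomial.toContinuousMapOnAlgHom (spectrum ℝ y)))
      (g := Polynomial.aeval y) (by simpa using hpolyX)
    exact DFunLike.congr_fun this p
  have hsub : (polynomialFunctions (spectrum ℝ y) : Set C(spectrum ℝ y, ℝ)) ⊆ S := by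
    intro g hg
    rw [polynomialFunctions_coe] at hg
    obtain ⟨p, rfl⟩ := hg
    show z * cfcHom hy _ = cfcHom hy _ * z
    rw [haeval]
    exact commute_aeval y z hz p
  have hdense := polynomialFunctions.topologicalClosure (spectrum ℝ y)
  have hg2 : g ∈ closure (polynomialFunctions (spectrum ℝ y) : Set C(spectrum ℝ y, ℝ)) := by
    have h7 : g ∈ (polynomialFunctions (spectrum ℝ y)).topologicalClosure := by
      rw [hdense]; exact Algebra.mem_top
    exact h7
  exact (hSclosed.closure_subset_iff.mpr hsub) hg2

lemma commute_cfc' (y z : H →L[ℂ] H) (hy : IsSelfAdjoint y) (hz : z * y = y * z)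
    (f : ℝ → ℝ) : z * cfc f y = cfc f y * z := by
  by_cases hf : ContinuousOn f (spectrum ℝ y)
  · rw [cfc_apply f y hy hf]
    exact commute_cfcHom y z hy hz _
  · rw [cfc_apply_of_not_continuousOn y hf, mul_zero, zero_mul]


/-- Polar-decomposition construction in a corner. -/
lemma corner_polar (P Q c d : H →L[ℂ] H)
    (hP : star P = P) (hP2 : P * P = P) (hQ : star Q = Q) (hQ2 : Q * Q = Q)
    (hcQ : Q * c = c) (hcP : c * P = c) (hdP : P * d = d) (hdQ : d * Q = d)
    (hdc : d * c = P) (hcd : c * d = Q) :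
    ∃ w r : H →L[ℂ] H, w = c * r ∧ star w * w = P ∧ w * star w = Q ∧
      (∀ z, z * (star c * c) = (star c * c) * z → z * P = P * z → z * r = r * z) := by
  set x := star c * c with hx
  set Y := x + (1 - P) with hY
  set Yinv := d * star d + (1 - P) with hYinv
  set q := cfc Real.sqrt Y with hq
  set r := Yinv * q with hr
  have hx_sa : star x = x := by rw [hx, star_mul, star_star]
  have hxP : x * P = x := by rw [hx, mul_assoc, hcP]
  have hPc_star : P * star c = star c := by rw [← hP, ← star_mul, hcP]
  have hPx : P * x = x := by rw [hx, ← mul_assoc, hPc_star]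
  have hY_sa : star Y = Y := by rw [hY, star_add, hx_sa, star_sub, star_one, hP]
  have hYinv_sa : star Yinv = Yinv := by
    rw [hYinv, star_add, star_mul, star_star, star_sub, star_one, hP]
  have h1P_sq : (1 - P) * (1 - P) = 1 - P := by
    rw [sub_mul, mul_sub, mul_sub, one_mul, mul_one, one_mul, hP2]; abel
  have hY_pos : (0 : H →L[ℂ] H) ≤ Y := by
    rw [hY]
    apply add_nonneg (star_mul_self_nonneg c)
    have h9 : (1 - P) = star (1 - P) * (1 - P) := by
      rw [star_sub, star_one, hP, h1P_sq]
    rw [h9]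
    exact star_mul_self_nonneg _
  have hxd : x * d = star c := by
    rw [hx, mul_assoc, hcd, ← hQ, ← star_mul, hcQ]
  have hsd_sc : star d * star c = Q := by rw [← star_mul, hcd, hQ]
  have hsd_P : star d * P = star d := by rw [← hP, ← star_mul, hdP]
  have hYYinv : Y * Yinv = 1 := by
    rw [hY, hYinv]
    have e1 : x * (d * star d) = P := by
      rw [← mul_assoc, hxd, ← star_mul, hdc, hP]
    have e2 : x * (1 - P) = 0 := by rw [mul_sub, mul_one, hxP, sub_self]
    have e3 : (1 - P) * (d * star d) = 0 := by
      rw [sub_mul, one_mul, ← mul_assoc, hdP, sub_self]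
    rw [add_mul, mul_add, mul_add, e1, e2, e3, h1P_sq]
    noncomm_ring
  have hYinvY : Yinv * Y = 1 := by
    rw [hY, hYinv]
    have e1 : (d * star d) * x = P := by
      rw [hx, mul_assoc, ← mul_assoc (star d), hsd_sc, ← mul_assoc, hdQ, hdc]
    have e2 : (d * star d) * (1 - P) = 0 := by
      rw [mul_sub, mul_one, mul_assoc, hsd_P, sub_self]
    have e3 : (1 - P) * x = 0 := by rw [sub_mul, one_mul, hPx, sub_self]
    rw [add_mul, mul_add, mul_add, e1, e2, e3, h1P_sq]
    noncomm_ring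
  have hq_sa : star q = q := by
    rw [hq]
    exact (cfc_predicate Real.sqrt Y).star_eq
  have hq_sq : q * q = Y := by
    rw [hq, ← cfc_mul Real.sqrt Real.sqrt Y]
    have h8 : cfc (fun z => Real.sqrt z * Real.sqrt z) Y = cfc (id : ℝ → ℝ) Y := by
      apply cfc_congr
      intro z hz
      have hz0 : 0 ≤ z := spectrum_nonneg_of_nonneg hY_pos hz
      simp [Real.mul_self_sqrt hz0]
    rw [h8, cfc_id ℝ Y]
  have hqY : q * Y = Y * q := by rw [← hq_sq, mul_assoc]
  have hqYinv : q * Yinv = Yinv * q := by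
    calc q * Yinv = Yinv * Y * q * Yinv := by rw [hYinvY, one_mul]
      _ = Yinv * (Y * q) * Yinv := by noncomm_ring
      _ = Yinv * (q * Y) * Yinv := by rw [hqY]
      _ = Yinv * q * (Y * Yinv) := by noncomm_ring
      _ = Yinv * q := by rw [hYYinv, mul_one]
  have hr_sa : star r = r := by rw [hr, star_mul, hq_sa, hYinv_sa, ← hqYinv]
  have hrq : r * q = 1 := by rw [hr, mul_assoc, hq_sq, hYinvY]
  have hqr : q * r = 1 := by rw [hr, ← mul_assoc, hqYinv, mul_assoc, hq_sq, hYinvY]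
  have hrr : r * r = Yinv := by
    rw [hr]
    calc Yinv * q * (Yinv * q) = Yinv * (q * Yinv) * q := by noncomm_ring
      _ = Yinv * (Yinv * q) * q := by rw [hqYinv]
      _ = Yinv * (Yinv * (q * q)) := by noncomm_ring
      _ = Yinv * (Yinv * Y) := by rw [hq_sq]
      _ = Yinv := by rw [hYinvY, mul_one]
  have hcomm : ∀ z, z * x = x * z → z * P = P * z → z * r = r * z := by
    intro z hzx hzP
    have hzY : z * Y = Y * z := by
      rw [hY, mul_add, add_mul, hzx, mul_sub, sub_mul, mul_one, one_mul, hzP]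
    have hzYinv : z * Yinv = Yinv * z := by
      calc z * Yinv = Yinv * Y * z * Yinv := by rw [hYinvY, one_mul]
        _ = Yinv * (Y * z) * Yinv := by noncomm_ring
        _ = Yinv * (z * Y) * Yinv := by rw [hzY]
        _ = Yinv * z * (Y * Yinv) := by noncomm_ring
        _ = Yinv * z := by rw [hYYinv, mul_one]
    have hzq : z * q = q * z := by
      rw [hq]
      exact commute_cfc' Y z hY_sa hzY Real.sqrt
    rw [hr]
    calc z * (Yinv * q) = (z * Yinv) * q := by noncomm_ring
      _ = Yinv * (z * q) := by rw [hzYinv]; noncomm_ring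
      _ = (Yinv * q) * z := by rw [hzq]; noncomm_ring
  have hPr : P * r = r * P := hcomm P (by rw [hPx, hxP]) (by rw [hP2])
  refine ⟨c * r, r, rfl, ?_, ?_, hcomm⟩
  · have h1 : star (c * r) * (c * r) = r * x * r := by
      rw [star_mul, hr_sa, hx]; noncomm_ring
    rw [h1]
    have hrY : r * Y = q := by
      rw [hr]
      calc Yinv * q * Y = Yinv * (q * Y) := by noncomm_ring
        _ = Yinv * (Y * q) := by rw [hqY]
        _ = (Yinv * Y) * q := by noncomm_ring
        _ = q := by rw [hYinvY, one_mul]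
    have hP_Yinv : P * Yinv = d * star d := by
      rw [hYinv, mul_add, ← mul_assoc, hdP, mul_sub, mul_one, hP2, sub_self, add_zero]
    have e : r * (1 - P) * r = (1 - P) * (r * r) := by
      have h2 : P * (r * r) = r * P * r := by rw [← mul_assoc, hPr]
      rw [mul_sub, mul_one, sub_mul, sub_mul, one_mul, h2]
    have e2 : (1 - P) * Yinv = 1 - P := by
      rw [sub_mul, one_mul, hP_Yinv, hYinv]
      noncomm_ring
    calc r * x * r = r * (Y - (1 - P)) * r := by rw [hY]; noncomm_ring
      _ = r * Y * r - r * (1 - P) * r := by noncomm_ring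
      _ = q * r - r * (1 - P) * r := by rw [hrY]
      _ = 1 - r * (1 - P) * r := by rw [hqr]
      _ = 1 - (1 - P) * (r * r) := by rw [e]
      _ = 1 - (1 - P) * Yinv := by rw [hrr]
      _ = 1 - (1 - P) := by rw [e2]
      _ = P := by noncomm_ring
  · have h1 : (c * r) * star (c * r) = c * Yinv * star c := by
      rw [star_mul, hr_sa, ← mul_assoc, mul_assoc c r r, hrr]
    rw [h1]
    have e1 : c * Yinv = Q * star d := by
      rw [hYinv, mul_add, ← mul_assoc, hcd, mul_sub, mul_one, hcP, sub_self, add_zero]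
    rw [e1, mul_assoc, hsd_sc, hQ2]


section shift

variable {a b v : H →L[ℂ] H}

lemma pi_absorb {v : H →L[ℂ] H}
    (hproj : (star v * v) * (star v * v) = star v * v) : v * (star v * v) = v := by
  have key : star (v * (star v * v) - v) * (v * (star v * v) - v) = 0 := by
    have expand : star (v * (star v * v) - v) * (v * (star v * v) - v)
        = (star v * v) * (star v * v) * (star v * v) - (star v * v) * (star v * v)
          - (star v * v) * (star v * v) + star v * v := by
      rw [star_sub, star_mul, star_mul, star_star]
      noncomm_ring
    rw [expand, hproj, hproj]
    abel
  have h0 := CStarRing.star_mul_self_eq_zero_iff (v * (star v * v) - v) |>.mp key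
  exact sub_eq_zero.mp h0

variable (ha : star a * a = 1) (hb : star b * b = 1)
    (hv1 : star v * v = 1 - a * star a) (hv2 : v * star v = 1 - b * star b)

include ha in
lemma da_proj : ((1 : H →L[ℂ] H) - a * star a) * (1 - a * star a) = 1 - a * star a := by
  have h : a * star a * (a * star a) = a * star a := by
    rw [mul_assoc, ← mul_assoc (star a), ha, one_mul]
  rw [sub_mul, mul_sub, mul_sub, one_mul, mul_one, one_mul, h]
  abel

include ha hv1 in
lemma v_da : v * (1 - a * star a) = v := by
  rw [← hv1]; exact pi_absorb (by rw [hv1]; exact da_proj ha)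

include hb hv2 in
lemma db_v : (1 - b * star b) * v = v := by
  have h : star v * (star (star v) * star v) = star v :=
    pi_absorb (v := star v) (by rw [star_star, hv2]; exact da_proj hb)
  rw [star_star] at h
  have h2 := congrArg star h
  rw [star_mul, star_mul, star_star] at h2
  rw [← hv2]
  exact h2

include ha in
lemma da_a : ((1 : H →L[ℂ] H) - a * star a) * a = 0 := by
  rw [sub_mul, one_mul, mul_assoc, ha, mul_one, sub_self]

include hb in
lemma db_b : ((1 : H →L[ℂ] H) - b * star b) * b = 0 := by
  rw [sub_mul, one_mul, mul_assoc, hb, mul_one, sub_self]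

include hb hv2 in
lemma sv_db : star v * (1 - b * star b) = star v := by
  have := congrArg star (db_v hb hv2)
  rwa [star_mul, star_sub, star_one, star_mul, star_star] at this

include hb hv2 in
lemma sv_bpow (j : ℕ) : star v * b ^ (j + 1) = 0 := by
  calc star v * b ^ (j + 1) = star v * ((1 - b * star b) * (b * b ^ j)) := by
        rw [← mul_assoc, sv_db hb hv2, ← pow_succ']
    _ = star v * (0 * b ^ j) := by rw [← mul_assoc (1 - b * star b), db_b hb]
    _ = 0 := by rw [zero_mul, mul_zero]

/-- summands of the shift intertwiner -/
noncomputable def Tk (a b v : H →L[ℂ] H) (k : ℕ) : H →L[ℂ] H := b ^ k * v * star (a ^ k)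

/-- partial sums -/
noncomputable def Sn (a b v : H →L[ℂ] H) (n : ℕ) : H →L[ℂ] H :=
  ∑ k ∈ range n, Tk a b v k

lemma star_Tk (k : ℕ) : star (Tk a b v k) = Tk b a (star v) k := by
  rw [Tk, Tk, star_mul, star_mul, star_star]
  noncomm_ring

lemma star_Sn (n : ℕ) : star (Sn a b v n) = Sn b a (star v) n := by
  rw [Sn, Sn, star_sum]
  exact Finset.sum_congr rfl fun k _ => star_Tk k

include hb hv2 in
lemma Tk_star_mul (k l : ℕ) (hkl : k < l) : star (Tk a b v k) * Tk a b v l = 0 := by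
  rw [Tk, Tk, star_mul, star_mul, star_star]
  obtain ⟨j, rfl⟩ : ∃ j, l = k + (j + 1) := ⟨l - k - 1, by omega⟩
  have h1 : star (b ^ k) * b ^ (k + (j + 1)) = b ^ (j + 1) := star_pow_mul_pow_add hb k (j + 1)
  calc a ^ k * (star v * star (b ^ k)) * (b ^ (k + (j + 1)) * v * star (a ^ (k + (j + 1))))
      = a ^ k * star v * (star (b ^ k) * b ^ (k + (j + 1))) * v * star (a ^ (k + (j + 1))) := by
        noncomm_ring
    _ = a ^ k * (star v * b ^ (j + 1)) * v * star (a ^ (k + (j + 1))) := by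
        rw [h1]; noncomm_ring
    _ = 0 := by rw [sv_bpow hb hv2, mul_zero, zero_mul, zero_mul]

include hb hv1 in
lemma Tk_star_self (k : ℕ) : star (Tk a b v k) * Tk a b v k
    = a ^ k * star (a ^ k) - a ^ (k + 1) * star (a ^ (k + 1)) := by
  rw [Tk, star_mul, star_mul, star_star]
  have h1 : star (b ^ k) * b ^ k = 1 := star_pow_mul_pow hb k
  have h2 : a ^ k * (star v * star (b ^ k)) * (b ^ k * v * star (a ^ k))
      = a ^ k * (star v * v) * star (a ^ k) := by
    calc a ^ k * (star v * star (b ^ k)) * (b ^ k * v * star (a ^ k))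
        = a ^ k * star v * (star (b ^ k) * b ^ k) * v * star (a ^ k) := by noncomm_ring
      _ = a ^ k * (star v * v) * star (a ^ k) := by rw [h1]; noncomm_ring
  rw [h2, hv1]
  have e1 : a ^ k * a = a ^ (k + 1) := (pow_succ a k).symm
  have e2 : star a * star (a ^ k) = star (a ^ (k + 1)) := by rw [← star_mul, ← pow_succ]
  calc a ^ k * (1 - a * star a) * star (a ^ k)
      = a ^ k * star (a ^ k) - (a ^ k * a) * (star a * star (a ^ k)) := by noncomm_ring
    _ = a ^ k * star (a ^ k) - a ^ (k + 1) * star (a ^ (k + 1)) := by rw [e1, e2]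

include hb hv2 in
lemma Sn_star_Tk (m l : ℕ) (hml : m ≤ l) : star (Sn a b v m) * Tk a b v l = 0 := by
  rw [Sn, star_sum, Finset.sum_mul]
  apply Finset.sum_eq_zero
  intro k hk
  exact Tk_star_mul hb hv2 k l (lt_of_lt_of_le (Finset.mem_range.mp hk) hml)

include hb hv1 hv2 in
lemma Sn_star_Sn (m n : ℕ) (hmn : m ≤ n) :
    star (Sn a b v m) * Sn a b v n = 1 - a ^ m * star (a ^ m) := by
  -- first the diagonal case by induction
  have diag : ∀ j, star (Sn a b v j) * Sn a b v j = 1 - a ^ j * star (a ^ j) := by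
    intro j
    induction j with
    | zero => simp [Sn]
    | succ j ih =>
      have hsplit : Sn a b v (j + 1) = Sn a b v j + Tk a b v j := by
        rw [Sn, Sn, Finset.sum_range_succ]
      have hcross : star (Sn a b v j) * Tk a b v j = 0 := Sn_star_Tk hb hv2 j j le_rfl
      have hcross' : star (Tk a b v j) * Sn a b v j = 0 := by
        have := congrArg star hcross
        rwa [star_mul, star_star, star_zero] at this
      rw [hsplit, star_add, add_mul, mul_add, mul_add, ih, hcross, hcross',
        Tk_star_self hb hv1 j]
      abel
  obtain ⟨k, rfl⟩ := Nat.exists_eq_add_of_le hmn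
  induction k with
  | zero => exact diag m
  | succ k ih =>
    have hsplit : Sn a b v (m + (k + 1)) = Sn a b v (m + k) + Tk a b v (m + k) := by
      rw [show m + (k + 1) = (m + k) + 1 from rfl, Sn, Sn, Finset.sum_range_succ]
    rw [hsplit, mul_add, ih (Nat.le_add_right m k), Sn_star_Tk hb hv2 m (m + k)
      (Nat.le_add_right m k), add_zero]

end shift



section shift2
variable {a b v W E F : H →L[ℂ] H}

variable (ha : star a * a = 1) (hb : star b * b = 1)
    (hv1 : star v * v = 1 - a * star a) (hv2 : v * star v = 1 - b * star b)

include ha hb hv1 hv2 in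
lemma exists_W : ∃ W : H →L[ℂ] H, ∀ x, Tendsto (fun n => Sn a b v n x) atTop (nhds (W x)) := by
  have hinner : ∀ m n, m ≤ n → ∀ x : H,
      ⟪Sn a b v n x, Sn a b v m x⟫ = ((‖x‖ : ℂ) ^ 2 - (‖(star (a ^ m)) x‖ : ℂ) ^ 2) := by
    intro m n hmn x
    have h0 : (star (Sn a b v m) * Sn a b v n) x = (star (Sn a b v m)) (Sn a b v n x) := rfl
    have h1 : ⟪(star (Sn a b v m) * Sn a b v n) x, x⟫ = ⟪Sn a b v n x, Sn a b v m x⟫ := by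
      rw [h0, inner_star_left]
    rw [← h1, Sn_star_Sn hb hv1 hv2 m n hmn]
    have h2 : ((1 : H →L[ℂ] H) - a ^ m * star (a ^ m)) x = x - (a ^ m * star (a ^ m)) x := by
      simp
    rw [h2, inner_sub_left, pn_inner ha, inner_self_eq_norm_sq_to_K, inner_self_eq_norm_sq_to_K]
    norm_cast
  have hnormsq : ∀ n (x : H), ‖Sn a b v n x‖ ^ 2 = ‖x‖ ^ 2 - ‖(star (a ^ n)) x‖ ^ 2 := by
    intro n x
    have := hinner n n le_rfl x
    have h3 : RCLike.re ⟪Sn a b v n x, Sn a b v n x⟫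
        = RCLike.re (((‖x‖ : ℂ) ^ 2 - (‖(star (a ^ n)) x‖ : ℂ) ^ 2)) := by rw [this]
    rw [inner_self_eq_norm_sq] at h3
    rw [h3]
    norm_cast
  have hbd : ∀ n (x : H), ‖Sn a b v n x‖ ≤ ‖x‖ := by
    intro n x
    have := hnormsq n x
    nlinarith [norm_nonneg (Sn a b v n x), norm_nonneg x, sq_nonneg ‖(star (a ^ n)) x‖]
  apply exists_strong_limit _ _ hbd
  intro x
  apply cauchySeq_of_sq_diff _ (fun n => ‖(star (a ^ n)) x‖ ^ 2)
  · intro m n hmn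
    exact pow_le_pow_left₀ (norm_nonneg _) (iso_star_pow_norm_antitone ha x hmn) 2
  · intro n; positivity
  · intro m n hmn
    have hre : ‖Sn a b v n x - Sn a b v m x‖ ^ 2 = ‖Sn a b v n x‖ ^ 2
        - 2 * RCLike.re ⟪Sn a b v n x, Sn a b v m x⟫ + ‖Sn a b v m x‖ ^ 2 :=
      norm_sub_sq (𝕜 := ℂ) _ _
    have h4 : RCLike.re ⟪Sn a b v n x, Sn a b v m x⟫ = ‖x‖ ^ 2 - ‖(star (a ^ m)) x‖ ^ 2 := by
      rw [hinner m n hmn x]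
      norm_cast
    rw [hre, h4, hnormsq n x, hnormsq m x]
    ring

variable (hW : ∀ x, Tendsto (fun n => Sn a b v n x) atTop (nhds (W x)))

include ha hb hv1 hv2 hW in
lemma W_star_W (hE : ∀ x, Tendsto (fun n => (a ^ n * star (a ^ n)) x) atTop (nhds (E x))) :
    star W * W = 1 - E := by
  ext x
  apply ext_inner_right ℂ
  intro y
  have h1 : ⟪(star W * W) x, y⟫ = ⟪W x, W y⟫ := by
    rw [show (star W * W) x = (star W) (W x) from rfl, inner_star_left]
  have h2 : Tendsto (fun n => ⟪Sn a b v n x, Sn a b v n y⟫) atTop (nhds ⟪W x, W y⟫) :=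
    (hW x).inner (hW y)
  have h3 : Tendsto (fun n => ⟪Sn a b v n x, Sn a b v n y⟫) atTop
      (nhds ⟪((1 - E) : H →L[ℂ] H) x, y⟫) := by
    have key : ∀ n, ⟪Sn a b v n x, Sn a b v n y⟫ = ⟪x - (a ^ n * star (a ^ n)) x, y⟫ := by
      intro n
      have h0 : (star (Sn a b v n) * Sn a b v n) x = (star (Sn a b v n)) (Sn a b v n x) := rfl
      have h1' : ⟪(star (Sn a b v n) * Sn a b v n) x, y⟫ = ⟪Sn a b v n x, Sn a b v n y⟫ := by
        rw [h0, inner_star_left]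
      rw [← h1', Sn_star_Sn hb hv1 hv2 n n le_rfl]
      simp
    simp only [key]
    have h5 : Tendsto (fun n => x - (a ^ n * star (a ^ n)) x) atTop (nhds (x - E x)) :=
      tendsto_const_nhds.sub (hE x)
    have h6 : ((1 - E) : H →L[ℂ] H) x = x - E x := by simp
    rw [h6]
    exact h5.inner tendsto_const_nhds
  rw [h1]
  exact tendsto_nhds_unique h2 h3

include hW in
lemma W_adjoint {W' : H →L[ℂ] H}
    (hW' : ∀ x, Tendsto (fun n => Sn b a (star v) n x) atTop (nhds (W' x))) :
    star W = W' := by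
  have key : ∀ x y, ⟪W' x, y⟫ = ⟪x, W y⟫ := by
    intro x y
    have h2 : Tendsto (fun n => ⟪Sn b a (star v) n x, y⟫) atTop (nhds ⟪W' x, y⟫) :=
      (hW' x).inner tendsto_const_nhds
    have h3 : Tendsto (fun n => ⟪Sn b a (star v) n x, y⟫) atTop (nhds ⟪x, W y⟫) := by
      have key2 : ∀ n, ⟪Sn b a (star v) n x, y⟫ = ⟪x, Sn a b v n y⟫ := by
        intro n
        rw [← star_Sn, inner_star_left]
      simp only [key2]
      exact tendsto_const_nhds.inner (hW y)
    exact tendsto_nhds_unique h2 h3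
  rw [ContinuousLinearMap.star_eq_adjoint]
  symm
  rw [ContinuousLinearMap.eq_adjoint_iff]
  exact key

include ha hb hv1 hW in
lemma W_intertwine : W * a = b * W := by
  have hkey : ∀ n, Sn a b v (n + 1) * a = b * Sn a b v n := by
    intro n
    induction n with
    | zero =>
      have hT0 : Tk a b v 0 = v := by rw [Tk]; simp
      have : Sn a b v 1 = v := by rw [Sn]; simp [hT0]
      rw [this, Sn]
      simp only [range_zero, Finset.sum_empty, mul_zero]
      calc v * a = (v * (1 - a * star a)) * a := by rw [v_da ha hv1]
        _ = v * ((1 - a * star a) * a) := by rw [mul_assoc]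
        _ = 0 := by rw [da_a ha, mul_zero]
    | succ n ih =>
      have hsplit : Sn a b v (n + 2) = Sn a b v (n + 1) + Tk a b v (n + 1) := by
        rw [Sn, Sn, Finset.sum_range_succ]
      have hsplit2 : Sn a b v (n + 1) = Sn a b v n + Tk a b v n := by
        rw [Sn, Sn, Finset.sum_range_succ]
      have hTa : Tk a b v (n + 1) * a = b * Tk a b v n := by
        rw [Tk, Tk]
        have hstep : star (a ^ (n + 1)) * a = star (a ^ n) := by
          rw [pow_succ', star_mul, mul_assoc, ha, mul_one]
        calc b ^ (n + 1) * v * star (a ^ (n + 1)) * a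
            = b ^ (n + 1) * v * (star (a ^ (n + 1)) * a) := by noncomm_ring
          _ = b ^ (n + 1) * v * star (a ^ n) := by rw [hstep]
          _ = b * (b ^ n * v * star (a ^ n)) := by rw [pow_succ']; noncomm_ring
      rw [hsplit, add_mul, ih, hTa, hsplit2, mul_add]
  ext x
  have h1 : Tendsto (fun n => Sn a b v (n + 1) (a x)) atTop (nhds (W (a x))) :=
    (hW (a x)).comp (tendsto_add_atTop_nat 1)
  have h2 : Tendsto (fun n => Sn a b v (n + 1) (a x)) atTop (nhds (b (W x))) := by
    have key : ∀ n, Sn a b v (n + 1) (a x) = b (Sn a b v n x) := by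
      intro n
      calc Sn a b v (n + 1) (a x) = (Sn a b v (n + 1) * a) x := rfl
        _ = (b * Sn a b v n) x := by rw [hkey n]
        _ = b (Sn a b v n x) := rfl
    simp only [key]
    exact ((b.continuous.tendsto _).comp (hW x))
  calc (W * a) x = W (a x) := rfl
    _ = b (W x) := tendsto_nhds_unique h1 h2
    _ = (b * W) x := rfl

include ha hv1 hW in
lemma W_E_zero (hE_sa : star E = E) (haE : a * E = E * a) (haaE : a * star a * E = E) :
    W * E = 0 := by
  have hdaE : ((1 : H →L[ℂ] H) - a * star a) * E = 0 := by
    rw [sub_mul, one_mul, haaE, sub_self]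
  have hvE : v * E = 0 := by rw [← v_da ha hv1, mul_assoc, hdaE, mul_zero]
  have hcomm : ∀ k : ℕ, star (a ^ k) * E = E * star (a ^ k) := by
    intro k
    have h1 : star a * E = E * star a := by
      have h2 := congrArg star haE
      rwa [star_mul, star_mul, hE_sa, eq_comm] at h2
    have c1 : Commute (star a) E := h1
    have c2 := c1.pow_left k
    rwa [← star_pow] at c2
  have hTkE : ∀ k, Tk a b v k * E = 0 := by
    intro k
    rw [Tk, mul_assoc, hcomm k, ← mul_assoc, mul_assoc (b ^ k), hvE, mul_zero, zero_mul]
  have hSnE : ∀ n, Sn a b v n * E = 0 := by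
    intro n
    rw [Sn, Finset.sum_mul]
    exact Finset.sum_eq_zero fun k _ => hTkE k
  ext x
  have h2 : ∀ n, Sn a b v n (E x) = 0 := by
    intro n
    calc Sn a b v n (E x) = (Sn a b v n * E) x := rfl
      _ = 0 := by rw [hSnE n]; rfl
  have h3 : Tendsto (fun n => Sn a b v n (E x)) atTop (nhds (W (E x))) := hW (E x)
  have h4 : Tendsto (fun n => Sn a b v n (E x)) atTop (nhds 0) := by
    simp only [h2]; exact tendsto_const_nhds
  calc (W * E) x = W (E x) := rfl
    _ = 0 := tendsto_nhds_unique h3 h4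
    _ = (0 : H →L[ℂ] H) x := rfl

include hb hv2 hW in
lemma F_W_zero (hF_sa : star F = F) (hbF : b * F = F * b) (hbbF : b * star b * F = F) :
    F * W = 0 := by
  have hFbb : F * (b * star b) = F := by
    have h2 := congrArg star hbbF
    rwa [star_mul, star_mul, star_star, hF_sa, ← mul_assoc] at h2
  have hFdb : F * ((1 : H →L[ℂ] H) - b * star b) = 0 := by
    rw [mul_sub, mul_one, hFbb, sub_self]
  have hFv : F * v = 0 := by rw [← db_v hb hv2, ← mul_assoc, hFdb, zero_mul]
  have hcomm : ∀ k : ℕ, F * b ^ k = b ^ k * F := by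
    intro k
    have c1 : Commute b F := hbF
    exact (c1.pow_left k).symm
  have hFTk : ∀ k, F * Tk a b v k = 0 := by
    intro k
    rw [Tk, ← mul_assoc, ← mul_assoc, hcomm k, mul_assoc (b ^ k), hFv, mul_zero, zero_mul]
  have hFSn : ∀ n, F * Sn a b v n = 0 := by
    intro n
    rw [Sn, Finset.mul_sum]
    exact Finset.sum_eq_zero fun k _ => hFTk k
  ext x
  have h3 : Tendsto (fun n => F (Sn a b v n x)) atTop (nhds (F (W x))) :=
    (F.continuous.tendsto _).comp (hW x)
  have h4 : Tendsto (fun n => F (Sn a b v n x)) atTop (nhds 0) := by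
    have h2 : ∀ n, F (Sn a b v n x) = 0 := by
      intro n
      calc F (Sn a b v n x) = (F * Sn a b v n) x := rfl
        _ = 0 := by rw [hFSn n]; rfl
    simp only [h2]; exact tendsto_const_nhds
  calc (F * W) x = F (W x) := rfl
    _ = 0 := tendsto_nhds_unique h3 h4
    _ = (0 : H →L[ℂ] H) x := rfl

end shift2

end P4P5
end SimIsoAux

open SimIsoAux


open ContinuousLinearMap in
/-- Two similar isometries on a Hilbert space are unitarily equivalent. -/
theorem similar_isometries_unitarily_equivalent {H : Type*} [NormedAddCommGroup H]
    [InnerProductSpace ℂ H] [CompleteSpace H] (a b t s : H →L[ℂ] H)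
    (ha : star a * a = 1) (hb : star b * b = 1)
    (hts : t * s = 1) (hst : s * t = 1) (hsim : b = t * a * s) :
    ∃ u : H →L[ℂ] H, star u * u = 1 ∧ u * star u = 1 ∧ b = u * a * star u := by
  -- basic intertwining relations
  have hbt : b * t = t * a := by
    rw [hsim, mul_assoc, mul_assoc, hst, mul_one]
  have has : a * s = s * b := by
    rw [hsim, ← mul_assoc, ← mul_assoc, hst, one_mul]
  -- range projections E, F
  obtain ⟨E, hE⟩ := exists_E ha
  obtain ⟨F, hF⟩ := exists_E hb
  have hE_sa : star E = E := E_sa ha hE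
  have hE_idem : E * E = E := E_idem ha hE
  have haE : a * E = E * a := a_comm_E ha hE
  have haaE : a * star a * E = E := aa_star_E ha hE
  have hF_sa : star F = F := E_sa hb hF
  have hF_idem : F * F = F := E_idem hb hF
  have hbF : b * F = F * b := a_comm_E hb hF
  have hbbF : b * star b * F = F := aa_star_E hb hF
  have hFtE : F * (t * E) = t * E := F_t_E ha hb hbt hE hF
  have hEsF : E * (s * F) = s * F := F_t_E hb ha has hF hE
  ------------------------------------------------------------------
  -- Part 1 : the "unitary part" w1
  ------------------------------------------------------------------
  obtain ⟨w1, r, hw1_def, hw1_star, hw1_final, hcomm⟩ :=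
    corner_polar E F (t * E) (s * F) hE_sa hE_idem hF_sa hF_idem
      hFtE
      (by rw [mul_assoc, hE_idem])
      hEsF
      (by rw [mul_assoc, hF_idem])
      (by rw [mul_assoc, hFtE, ← mul_assoc, hst, one_mul])
      (by rw [mul_assoc, hEsF, ← mul_assoc, hts, one_mul])
  -- a commutes with star (t*E) * (t*E)
  have hsaE : star a * E = E * star a := by
    have h2 := congrArg star haE
    rwa [star_mul, star_mul, hE_sa, eq_comm] at h2
  have hstar_hbt : star t * star b = star a * star t := by
    have h2 := congrArg star hbt
    rwa [star_mul, star_mul] at h2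
  have hkey1 : star a * (star t * t) * a = star t * t := by
    calc star a * (star t * t) * a = (star a * star t) * (t * a) := by noncomm_ring
      _ = (star t * star b) * (b * t) := by rw [hstar_hbt, hbt]
      _ = star t * (star b * b) * t := by noncomm_ring
      _ = star t * t := by rw [hb, mul_one]
  have hxform : star (t * E) * (t * E) = E * (star t * t) * E := by
    rw [star_mul, hE_sa]; noncomm_ring
  have h_sxa : star a * (E * (star t * t) * E) * a = E * (star t * t) * E := by
    calc star a * (E * (star t * t) * E) * a
        = (star a * E) * (star t * t) * (E * a) := by noncomm_ring
      _ = (E * star a) * (star t * t) * (a * E) := by rw [hsaE, ← haE]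
      _ = E * (star a * (star t * t) * a) * E := by noncomm_ring
      _ = E * (star t * t) * E := by rw [hkey1]
  have h_aax : (a * star a) * (E * (star t * t) * E) = E * (star t * t) * E := by
    calc (a * star a) * (E * (star t * t) * E)
        = ((a * star a) * E) * ((star t * t) * E) := by noncomm_ring
      _ = E * ((star t * t) * E) := by rw [haaE]
      _ = E * (star t * t) * E := by noncomm_ring
  have hax : a * (star (t * E) * (t * E)) = (star (t * E) * (t * E)) * a := by
    rw [hxform]
    calc a * (E * (star t * t) * E)
        = a * (star a * (E * (star t * t) * E) * a) := by rw [h_sxa]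
      _ = ((a * star a) * (E * (star t * t) * E)) * a := by noncomm_ring
      _ = (E * (star t * t) * E) * a := by rw [h_aax]
  have hra : a * r = r * a := hcomm a hax haE
  -- E commutes with r
  have hEx : E * (star (t * E) * (t * E)) = (star (t * E) * (t * E)) * E := by
    rw [hxform]
    calc E * (E * (star t * t) * E) = (E * E) * (star t * t) * E := by noncomm_ring
      _ = E * (star t * t) * E := by rw [hE_idem]
      _ = E * (star t * t) * (E * E) := by rw [hE_idem]
      _ = (E * (star t * t) * E) * E := by noncomm_ring
  have hrE : E * r = r * E := hcomm E hEx rfl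
  -- intertwining for w1
  have hca : (t * E) * a = b * (t * E) := by
    calc (t * E) * a = t * (E * a) := by rw [mul_assoc]
      _ = t * (a * E) := by rw [← haE]
      _ = (t * a) * E := by rw [← mul_assoc]
      _ = (b * t) * E := by rw [hbt]
      _ = b * (t * E) := by rw [mul_assoc]
  have hw1a : w1 * a = b * w1 := by
    rw [hw1_def]
    calc (t * E) * r * a = (t * E) * (r * a) := by rw [mul_assoc]
      _ = (t * E) * (a * r) := by rw [← hra]
      _ = ((t * E) * a) * r := by rw [← mul_assoc]
      _ = (b * (t * E)) * r := by rw [hca]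
      _ = b * ((t * E) * r) := by rw [mul_assoc]
  have hFw1 : F * w1 = w1 := by
    rw [hw1_def, ← mul_assoc, hFtE]
  have hw1E : w1 * E = w1 := by
    rw [hw1_def]
    calc (t * E) * r * E = (t * E) * (r * E) := by rw [mul_assoc]
      _ = (t * E) * (E * r) := by rw [hrE]
      _ = ((t * E) * E) * r := by rw [← mul_assoc]
      _ = (t * E) * r := by rw [mul_assoc t E E, hE_idem]
  ------------------------------------------------------------------
  -- Part 2 : the "shift part" W
  ------------------------------------------------------------------
  have hsa_da : star a * (1 - a * star a) = 0 := by
    rw [mul_sub, mul_one, ← mul_assoc, ha, one_mul, sub_self]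
  have hsb_db : star b * (1 - b * star b) = 0 := by
    rw [mul_sub, mul_one, ← mul_assoc, hb, one_mul, sub_self]
  have hst' : star t * star s = 1 := by rw [← star_mul, hst, star_one]
  have hts' : star s * star t = 1 := by rw [← star_mul, hts, star_one]
  have hstar_has : star s * star a = star b * star s := by
    have h2 := congrArg star has
    rwa [star_mul, star_mul] at h2
  have hda_sa : star ((1 : H →L[ℂ] H) - a * star a) = 1 - a * star a := by
    rw [star_sub, star_one, star_mul, star_star]
  have hdb_sa : star ((1 : H →L[ℂ] H) - b * star b) = 1 - b * star b := by
    rw [star_sub, star_one, star_mul, star_star]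
  have hcQ2 : (1 - b * star b) * (star s * (1 - a * star a)) = star s * (1 - a * star a) := by
    have h1 : star b * (star s * (1 - a * star a)) = 0 := by
      rw [← mul_assoc, ← hstar_has, mul_assoc, hsa_da, mul_zero]
    rw [sub_mul, one_mul, mul_assoc, h1, mul_zero, sub_zero]
  have hdP2 : (1 - a * star a) * (star t * (1 - b * star b)) = star t * (1 - b * star b) := by
    have h1 : star a * (star t * (1 - b * star b)) = 0 := by
      rw [← mul_assoc, ← hstar_hbt, mul_assoc, hsb_db, mul_zero]
    rw [sub_mul, one_mul, mul_assoc, h1, mul_zero, sub_zero]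
  obtain ⟨v, r2, hv_def, hv1, hv2, _⟩ :=
    corner_polar (1 - a * star a) (1 - b * star b)
      (star s * (1 - a * star a)) (star t * (1 - b * star b))
      hda_sa (da_proj ha) hdb_sa (da_proj hb)
      hcQ2
      (by rw [mul_assoc, da_proj ha])
      hdP2
      (by rw [mul_assoc, da_proj hb])
      (by rw [mul_assoc, hcQ2, ← mul_assoc, hst', one_mul])
      (by rw [mul_assoc, hdP2, ← mul_assoc, hts', one_mul])
  have hv1' : star (star v) * star v = 1 - b * star b := by rw [star_star, hv2]
  have hv2' : star v * star (star v) = 1 - a * star a := by rw [star_star, hv1]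
  obtain ⟨W, hW⟩ := exists_W ha hb hv1 hv2
  obtain ⟨W', hW'⟩ := exists_W hb ha hv1' hv2'
  have hWadj : star W = W' := W_adjoint hW hW'
  have hWW : star W * W = 1 - E := W_star_W ha hb hv1 hv2 hW hE
  have hWWs : W * star W = 1 - F := by
    have h1 : star W' * W' = 1 - F := W_star_W hb ha hv1' hv2' hW' hF
    rw [← hWadj, star_star] at h1
    exact h1
  have hWa : W * a = b * W := W_intertwine ha hb hv1 hW
  have hWE : W * E = 0 := W_E_zero ha hv1 hW hE_sa haE haaE
  have hFW : F * W = 0 := F_W_zero hb hv2 hW hF_sa hbF hbbF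
  ------------------------------------------------------------------
  -- Assemble the unitary u = w1 + W
  ------------------------------------------------------------------
  refine ⟨w1 + W, ?_, ?_, ?_⟩
  case _ =>
    have hcross1 : star w1 * W = 0 := by
      have h1 : star w1 = star w1 * F := by
        rw [← hF_sa, ← star_mul, hFw1]
      rw [h1, mul_assoc, hFW, mul_zero]
    have hcross2 : star W * w1 = 0 := by
      have h2 := congrArg star hcross1
      rwa [star_mul, star_star, star_zero] at h2
    rw [star_add, add_mul, mul_add, mul_add, hw1_star, hWW, hcross1, hcross2]
    abel
  case _ =>
    have hcross1 : w1 * star W = 0 := by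
      have h1 : E * star W = 0 := by
        have h2 := congrArg star hWE
        rwa [star_mul, hE_sa, star_zero] at h2
      rw [← hw1E, mul_assoc, h1, mul_zero]
    have hcross2 : W * star w1 = 0 := by
      have h2 := congrArg star hcross1
      rwa [star_mul, star_star, star_zero] at h2
    rw [star_add, add_mul, mul_add, mul_add, hw1_final, hWWs, hcross1, hcross2]
    abel
  case _ =>
    have hua : (w1 + W) * a = b * (w1 + W) := by
      rw [add_mul, mul_add, hw1a, hWa]
    have huu : (w1 + W) * star (w1 + W) = 1 := by
      have hcross1 : w1 * star W = 0 := by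
        have h1 : E * star W = 0 := by
          have h2 := congrArg star hWE
          rwa [star_mul, hE_sa, star_zero] at h2
        rw [← hw1E, mul_assoc, h1, mul_zero]
      have hcross2 : W * star w1 = 0 := by
        have h2 := congrArg star hcross1
        rwa [star_mul, star_star, star_zero] at h2
      rw [star_add, add_mul, mul_add, mul_add, hw1_final, hWWs, hcross1, hcross2]
      abel
    calc b = b * ((w1 + W) * star (w1 + W)) := by rw [huu, mul_one]
      _ = (b * (w1 + W)) * star (w1 + W) := by rw [mul_assoc]
      _ = ((w1 + W) * a) * star (w1 + W) := by rw [hua]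
      _ = (w1 + W) * a * star (w1 + W) := rfl
end

section
/- Let A be a unital C*-algebra and x ∈ A with ‖x‖ ≤ 1. Then x is an extreme point of the closed unit ball of A if and only if x is a partial isometry (x = x x* x) satisfying (1 - x*x) a (1 - x x*) = 0 for all a ∈ A. -/
/-!
`x` is extreme in the unit ball iff no `b ≠ 0` has both `x ± b` in the ball, and by the C⋆-identity
`‖y‖ ≤ 1` means `y⋆y ≤ 1`. If `x` is extreme, the perturbation `b = x (1 - x⋆x) / 2` stays in the
ball, since `x ± b = x f(x⋆x) / 2` with `f(t) = 3 - t` resp. `1 + t`, and `t f(t)² ≤ 4` on `[0, 1]`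
(for `3 - t` because `4 - t (3 - t)² = (1 - t)² (4 - t)`); so `x = x x⋆ x`. Then `p = x⋆x` and
`q = x x⋆` are projections, and every small `b = (1 - q) c (1 - p)` has
`(x ± b)⋆(x ± b) = p + b⋆b ≤ 1`, hence `b = 0`. Conversely, if `x ± b` lie in the ball then
`b⋆b ≤ 1 - p` and `b b⋆ ≤ 1 - q`, which force `b⋆ = (1 - p) b⋆ (1 - q)`, and this vanishes by assumption.
-/

section UnitBall

variable {E : Type*} [Norm E] [AddCommGroup E] [Module ℝ E]

theorem unitBall_extreme_iff (x : E) :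
    (∀ y z : E, ‖y‖ ≤ 1 → ‖z‖ ≤ 1 → x = (2⁻¹ : ℝ) • (y + z) → y = x ∧ z = x) ↔
      ∀ b : E, ‖x + b‖ ≤ 1 → ‖x - b‖ ≤ 1 → b = 0 := by
  constructor
  · intro hext b h₁ h₂
    have hmid : x = (2⁻¹ : ℝ) • ((x + b) + (x - b)) := by module
    simpa using (hext _ _ h₁ h₂ hmid).1
  · intro hext y z hy hz hyz
    have hz' : z = x - (y - x) := by rw [hyz]; module
    have hy' : y = x + (y - x) := by abel
    have hb := hext (y - x) (hy' ▸ hy) (hz' ▸ hz)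
    rw [sub_eq_zero] at hb
    exact ⟨hb, by rw [hz', hb, sub_self, sub_zero]⟩

end UnitBall

def IsPartialIsometry {R : Type*} [Mul R] [Star R] (x : R) : Prop :=
  x * star x * x = x

namespace IsPartialIsometry

variable {R : Type*} [Ring R] [StarRing R] {x : R}

protected theorem star (h : IsPartialIsometry x) : IsPartialIsometry (star x) := by
  simpa [IsPartialIsometry, mul_assoc] using congr(Star.star $h)

theorem isStarProjection_star_mul_self (h : IsPartialIsometry x) :
    IsStarProjection (Star.star x * x) where
  isIdempotentElem := by
    rw [IsIdempotentElem, mul_assoc, ← mul_assoc x, h]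
  isSelfAdjoint := .star_mul_self x

theorem isStarProjection_mul_star_self (h : IsPartialIsometry x) :
    IsStarProjection (x * Star.star x) := by
  simpa using h.star.isStarProjection_star_mul_self

theorem mul_one_sub_star_mul_self (h : IsPartialIsometry x) :
    x * (1 - Star.star x * x) = 0 := by
  rw [mul_sub, mul_one, ← mul_assoc, h, sub_self]

theorem star_mul_one_sub_mul_star_self (h : IsPartialIsometry x) :
    Star.star x * (1 - x * Star.star x) = 0 := by
  simpa using h.star.mul_one_sub_star_mul_self

end IsPartialIsometry

theorem norm_mul_one_add_star_mul_self_le_two {A : Type*} [NormedRing A] [StarRing A]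
    [CStarRing A] {x : A} (hx : ‖x‖ ≤ 1) :
    ‖x * (1 + star x * x)‖ ≤ 2 := by
  have hp : ‖star x * x‖ ≤ 1 := by
    rw [CStarRing.norm_star_mul_self]
    exact mul_le_one₀ hx (norm_nonneg x) hx
  calc ‖x * (1 + star x * x)‖ ≤ ‖x‖ + ‖x‖ * ‖star x * x‖ := by
        rw [mul_add, mul_one]
        exact (norm_add_le _ _).trans (add_le_add_right (norm_mul_le _ _) _)
    _ ≤ 1 + 1 * 1 := by gcongr
    _ = 2 := by norm_num

section CStarAlgebra

variable {A : Type*} [CStarAlgebra A] [PartialOrder A] [StarOrderedRing A]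

theorem norm_le_one_iff_star_mul_self_le_one (c : A) : ‖c‖ ≤ 1 ↔ star c * c ≤ 1 := by
  rw [← CStarAlgebra.norm_le_one_iff_of_nonneg _ (star_mul_self_nonneg c),
    CStarRing.norm_star_mul_self, ← sq, sq_le_one_iff₀ (norm_nonneg c)]

theorem star_mul_self_le_of_mul_eq_self {e b : A} (he : IsStarProjection e) (hb : ‖b‖ ≤ 1)
    (h : b * e = b) : star b * b ≤ e := by
  have hconj : star b * b = star e * (star b * b) * e := by
    conv_lhs => rw [← h]
    simp only [star_mul, he.isSelfAdjoint.star_eq, mul_assoc]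
  calc star b * b = star e * (star b * b) * e := hconj
    _ ≤ star e * 1 * e :=
      star_left_conjugate_le_conjugate ((norm_le_one_iff_star_mul_self_le_one b).1 hb) e
    _ = e := by rw [mul_one, he.isSelfAdjoint.star_eq, he.isIdempotentElem.eq]

theorem mul_eq_zero_of_star_mul_self_le_one_sub {e a : A} (he : IsStarProjection e)
    (h : star a * a ≤ 1 - e) : a * e = 0 := by
  have h₁ := (he.one_sub.mul_right_and_mul_left_of_nonneg_of_le (star_mul_self_nonneg a) h).1
  have h₂ : star a * a * e = 0 := by
    rw [mul_sub, mul_one, sub_eq_self] at h₁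
    exact h₁
  rw [← CStarRing.star_mul_self_eq_zero_iff, star_mul, he.isSelfAdjoint.star_eq, mul_assoc,
    ← mul_assoc (star a), h₂, mul_zero]

theorem star_mul_self_add_star_mul_self_le_one {x a : A} (h₁ : ‖x + a‖ ≤ 1) (h₂ : ‖x - a‖ ≤ 1) :
    star x * x + star a * a ≤ 1 := by
  rw [norm_le_one_iff_star_mul_self_le_one] at h₁ h₂
  have hsum : star (x + a) * (x + a) + star (x - a) * (x - a) =
      (2 : ℝ) • (star x * x + star a * a) := by
    simp only [star_add, star_sub, two_smul]
    noncomm_ring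
  have := add_le_add h₁ h₂
  rw [hsum, ← two_smul ℝ] at this
  exact le_of_smul_le_smul_left this two_pos

theorem norm_mul_three_sub_star_mul_self_le_two {x : A} (hx : ‖x‖ ≤ 1) :
    ‖x * (3 - star x * x)‖ ≤ 2 := by
  set p := star x * x
  have hpsa : IsSelfAdjoint p := .star_mul_self x
  have hp : p ≤ 1 := (norm_le_one_iff_star_mul_self_le_one x).1 hx
  have hc : star (x * (3 - p)) * (x * (3 - p)) = (3 - p) * p * (3 - p) := by
    simp only [star_mul, star_sub, star_ofNat, hpsa.star_eq, p]
    noncomm_ring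
  have hfactor : 4 - (3 - p) * p * (3 - p) = (1 - p) * (4 - p) * (1 - p) := by
    noncomm_ring
    simp only [zsmul_eq_mul, Int.cast_ofNat, mul_one]
    abel
  have h4p : 0 ≤ 4 - p := by
    rw [show (4 : A) - p = 3 + (1 - p) by rw [← add_sub_assoc]; norm_num]
    exact add_nonneg (Nat.cast_nonneg' 3) (sub_nonneg.2 hp)
  have hle : star (x * (3 - p)) * (x * (3 - p)) ≤ (4 : ℕ) := by
    rw [hc, Nat.cast_ofNat, ← sub_nonneg, hfactor]
    exact ((IsSelfAdjoint.one A).sub hpsa).conjugate_nonneg h4p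
  rw [← CStarAlgebra.norm_le_natCast_iff_of_nonneg _ _ (star_mul_self_nonneg _),
    CStarRing.norm_star_mul_self, Nat.cast_ofNat] at hle
  nlinarith [norm_nonneg (x * (3 - p))]

theorem IsPartialIsometry.of_unitBall_extreme {x : A} (hx : ‖x‖ ≤ 1)
    (hext : ∀ b : A, ‖x + b‖ ≤ 1 → ‖x - b‖ ≤ 1 → b = 0) : IsPartialIsometry x := by
  have hb := hext ((2⁻¹ : ℝ) • (x - x * (star x * x)))
  have hplus : x + (2⁻¹ : ℝ) • (x - x * (star x * x)) = (2⁻¹ : ℝ) • (x * (3 - star x * x)) := by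
    noncomm_ring; module
  have hminus : x - (2⁻¹ : ℝ) • (x - x * (star x * x)) = (2⁻¹ : ℝ) • (x * (1 + star x * x)) := by
    noncomm_ring; module
  rw [hplus, hminus, norm_smul, norm_smul, Real.norm_of_nonneg (by norm_num)] at hb
  have h := hb (by linarith [norm_mul_three_sub_star_mul_self_le_two hx])
    (by linarith [norm_mul_one_add_star_mul_self_le_two hx])
  rw [smul_eq_zero_iff_right (by norm_num), sub_eq_zero] at h
  rw [IsPartialIsometry, mul_assoc]
  exact h.symm

theorem IsPartialIsometry.eq_zero_of_star_mul_eq_zero {x : A} (hpi : IsPartialIsometry x)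
    (hext : ∀ b : A, ‖x + b‖ ≤ 1 → ‖x - b‖ ≤ 1 → b = 0) {b : A} (hb : ‖b‖ ≤ 1)
    (hxb : star x * b = 0) (hbp : b * (1 - star x * x) = b) : b = 0 := by
  have hbb : star b * b ≤ 1 - star x * x :=
    star_mul_self_le_of_mul_eq_self hpi.isStarProjection_star_mul_self.one_sub hb hbp
  have hnorm : ∀ c : A, star x * c = 0 → star c * c ≤ 1 - star x * x → ‖x + c‖ ≤ 1 := by
    intro c hxc hcc
    have hcx : star c * x = 0 := by simpa using congr(star $hxc)
    rw [norm_le_one_iff_star_mul_self_le_one]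
    calc star (x + c) * (x + c) = star x * x + star c * c := by
          simp only [star_add, add_mul, mul_add, hxc, hcx, add_zero, zero_add]
      _ ≤ star x * x + (1 - star x * x) := add_le_add_right hcc _
      _ = 1 := add_sub_cancel _ _
  refine hext b (hnorm b hxb hbb) ?_
  simpa [sub_eq_add_neg] using hnorm (-b) (by simp [hxb]) (by simpa using hbb)

theorem IsPartialIsometry.one_sub_mul_mul_one_sub_eq_zero {x : A} (hpi : IsPartialIsometry x)
    (hext : ∀ b : A, ‖x + b‖ ≤ 1 → ‖x - b‖ ≤ 1 → b = 0) (a : A) :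
    (1 - star x * x) * a * (1 - x * star x) = 0 := by
  have hp := hpi.isStarProjection_star_mul_self.one_sub
  have hq := hpi.isStarProjection_mul_star_self.one_sub
  suffices h : ∀ c : A, (1 - x * star x) * c * (1 - star x * x) = 0 by
    simpa [star_mul, hp.isSelfAdjoint.star_eq, hq.isSelfAdjoint.star_eq, mul_assoc]
      using congr(star $(h (star a)))
  intro c
  have ht : 0 < (1 + ‖c‖)⁻¹ := by positivity
  have hc : ‖(1 + ‖c‖)⁻¹ • c‖ ≤ 1 := by
    rw [norm_smul, Real.norm_of_nonneg ht.le, inv_mul_le_one₀ (by positivity)]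
    linarith
  have h := hpi.eq_zero_of_star_mul_eq_zero hext (b := (1 - x * star x) * ((1 + ‖c‖)⁻¹ • c) *
      (1 - star x * x)) ?_ ?_ ?_
  · rwa [mul_smul_comm, smul_mul_assoc, smul_eq_zero_iff_right ht.ne'] at h
  · calc _ ≤ ‖1 - x * star x‖ * ‖(1 + ‖c‖)⁻¹ • c‖ * ‖1 - star x * x‖ := norm_mul₃_le
      _ ≤ 1 * 1 * 1 := by gcongr; exacts [hq.norm_le, hp.norm_le]
      _ = 1 := by norm_num
  · rw [← mul_assoc, ← mul_assoc, hpi.star_mul_one_sub_mul_star_self, zero_mul, zero_mul]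
  · rw [mul_assoc, hp.isIdempotentElem.eq]

theorem IsPartialIsometry.unitBall_extreme {x : A} (hpi : IsPartialIsometry x)
    (hann : ∀ a : A, (1 - star x * x) * a * (1 - x * star x) = 0) :
    ∀ b : A, ‖x + b‖ ≤ 1 → ‖x - b‖ ≤ 1 → b = 0 := by
  intro b h₁ h₂
  have hbp : b * (star x * x) = 0 :=
    mul_eq_zero_of_star_mul_self_le_one_sub hpi.isStarProjection_star_mul_self
      (le_sub_iff_add_le'.2 (star_mul_self_add_star_mul_self_le_one h₁ h₂))
  have hbq : star b * (x * star x) = 0 := by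
    refine mul_eq_zero_of_star_mul_self_le_one_sub hpi.isStarProjection_mul_star_self ?_
    rw [le_sub_iff_add_le']
    simpa using star_mul_self_add_star_mul_self_le_one (x := star x) (a := star b)
      (by rwa [← star_add, norm_star]) (by rwa [← star_sub, norm_star])
  have hpb : star x * x * star b = 0 := by simpa [mul_assoc] using congr(star $hbp)
  have hb : star b = (1 - star x * x) * star b * (1 - x * star x) := by
    rw [sub_mul, one_mul, hpb, sub_zero, mul_sub, mul_one, hbq, sub_zero]
  rw [← star_eq_zero, hb, hann]

end CStarAlgebra

/-- Characterization of linear extreme points of the closed unit ball of a unital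
C*-algebra: `x` with `‖x‖ ≤ 1` is extreme iff `x` is a partial isometry with
`(1 - x*x) A (1 - xx*) = {0}`. -/
theorem extreme_point_iff_partialIsometry {A : Type*} [NormedRing A] [StarRing A]
    [CStarRing A] [NormedAlgebra ℂ A] [CompleteSpace A] [StarModule ℂ A]
    (x : A) (hx : ‖x‖ ≤ 1) :
    (∀ y z : A, ‖y‖ ≤ 1 → ‖z‖ ≤ 1 → x = (2⁻¹ : ℝ) • (y + z) → y = x ∧ z = x) ↔
      (x * star x * x = x ∧ ∀ a : A, (1 - star x * x) * a * (1 - x * star x) = 0) := by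
  let _ : CStarAlgebra A := { ‹NormedRing A›, ‹StarRing A›, ‹CStarRing A›, ‹NormedAlgebra ℂ A›,
    ‹StarModule ℂ A›, ‹CompleteSpace A› with }
  let _ : PartialOrder A := CStarAlgebra.spectralOrder A
  have _ : StarOrderedRing A := CStarAlgebra.spectralOrderedRing A
  rw [unitBall_extreme_iff]
  refine ⟨fun hext => ?_, fun ⟨hpi, hann⟩ => IsPartialIsometry.unitBall_extreme hpi hann⟩
  have hpi := IsPartialIsometry.of_unitBall_extreme hx hext
  exact ⟨hpi, hpi.one_sub_mul_mul_one_sub_eq_zero hext⟩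
end

section
/- Let A be a unital C*-algebra and x an element of its closed unit ball. Suppose that whenever x = t₁* a₁ t₁ + t₂* a₂ t₂ with a₁, a₂ in the unit ball and t₁, t₂ invertible elements satisfying t₁*t₁ + t₂*t₂ = 1, each aᵢ is unitarily equivalent to x. Then x is a C*-extreme point: for every k, whenever x = ∑_{i=1}^k tᵢ* aᵢ tᵢ with all aᵢ in the unit ball and tᵢ invertible with ∑ tᵢ*tᵢ = 1, each aᵢ is unitarily equivalent to x. -/
/-!
Induct on the number of summands. A single summand `t* a t` with `t* t = 1` and `t` invertible
is already a unitary conjugate of `a`. For `k + 2` summands, keep the first one and write the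
remaining coefficients as `tⱼ = rⱼ s`, where `s* s = ∑ⱼ tⱼ* tⱼ` is invertible (it dominates an
invertible positive term) and then `∑ⱼ rⱼ* rⱼ = 1`. This exhibits `x = t₀* a₀ t₀ + s* b s` with
`b = ∑ⱼ rⱼ* aⱼ rⱼ`, which lies in the unit ball by the Kadison–Schwarz type inequality
`b* b ≤ ∑ⱼ rⱼ* aⱼ* aⱼ rⱼ`. The two-term hypothesis gives `a₀ ≃ x` and `b = v* x v` with `v` unitary,
so `x = ∑ⱼ (rⱼ v*)* aⱼ (rⱼ v*)` is a proper combination with one summand fewer.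
-/

open Finset

section StarRing

variable {R ι : Type*} [Ring R] [StarRing R] [Fintype ι]

lemma sum_star_mul_mul_mul_right (a r : ι → R) (u : R) :
    ∑ i, star (r i * u) * a i * (r i * u) = star u * (∑ i, star (r i) * a i * r i) * u := by
  simp only [mul_sum, sum_mul, star_mul, mul_assoc]

lemma sum_star_mul_self_mul_right (r : ι → R) (u : R) :
    ∑ i, star (r i * u) * (r i * u) = star u * (∑ i, star (r i) * r i) * u := by
  simpa using sum_star_mul_mul_mul_right 1 r u

lemma eq_mul_mul_star_of_eq_star_mul_mul {u a x : R} (hu : u * star u = 1)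
    (h : a = star u * x * u) : x = u * a * star u := by
  rw [h]
  calc x = u * star u * x * (u * star u) := by rw [hu, one_mul, mul_one]
    _ = u * (star u * x * u) * star u := by noncomm_ring

lemma exists_unitary_eq_star_mul_mul {t a x : R} (ht : IsUnit t) (h1 : star t * t = 1)
    (hx : x = star t * a * t) :
    ∃ u : R, star u * u = 1 ∧ u * star u = 1 ∧ a = star u * x * u := by
  have ht' : t * star t = 1 := (ht.mem_unitary_of_star_mul_self h1).2
  exact ⟨star t, by rwa [star_star], by rwa [star_star],
    by rw [star_star]; exact eq_mul_mul_star_of_eq_star_mul_mul ht' hx⟩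

lemma star_mul_self_sum_conjugate_le [PartialOrder R] [StarOrderedRing R] (a r : ι → R)
    (hr : ∑ i, star (r i) * r i = 1) :
    star (∑ i, star (r i) * a i * r i) * ∑ i, star (r i) * a i * r i ≤
      ∑ i, star (r i) * (star (a i) * a i) * r i := by
  set c := ∑ i, star (r i) * a i * r i with hc
  have hcstar : ∑ i, star (r i) * star (a i) * r i = star c := by
    simp only [hc, star_sum, star_mul, star_star, mul_assoc]
  have hexpand : ∑ i, star (a i * r i - r i * c) * (a i * r i - r i * c) =
      ∑ i, star (r i) * (star (a i) * a i) * r i - star c * c := by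
    have e : ∀ i, star (a i * r i - r i * c) * (a i * r i - r i * c) =
        star (r i) * (star (a i) * a i) * r i - star (r i) * star (a i) * r i * c
          - star c * (star (r i) * a i * r i) + star c * (star (r i) * r i * c) := by
      intro i; simp only [star_sub, star_mul]; noncomm_ring
    rw [sum_congr rfl fun i _ => e i, sum_add_distrib, sum_sub_distrib, sum_sub_distrib,
      ← sum_mul, ← mul_sum, ← mul_sum, ← sum_mul, hcstar, ← hc, hr]
    noncomm_ring
  rw [← sub_nonneg, ← hexpand]
  exact sum_nonneg fun i _ => star_mul_self_nonneg _

end StarRing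

section CStarAlgebra

variable {A ι : Type*} [CStarAlgebra A] [PartialOrder A] [StarOrderedRing A] [Fintype ι]

lemma star_mul_self_le_one_of_norm_le_one {a : A} (ha : ‖a‖ ≤ 1) : star a * a ≤ 1 := by
  rw [← CStarAlgebra.norm_le_one_iff_of_nonneg _ (star_mul_self_nonneg a),
    CStarRing.norm_star_mul_self]
  exact mul_le_one₀ ha (norm_nonneg a) ha

lemma norm_sum_star_mul_mul_le_one {a r : ι → A} (ha : ∀ i, ‖a i‖ ≤ 1)
    (hr : ∑ i, star (r i) * r i = 1) : ‖∑ i, star (r i) * a i * r i‖ ≤ 1 := by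
  set c := ∑ i, star (r i) * a i * r i
  have hc : star c * c ≤ 1 :=
    calc star c * c ≤ ∑ i, star (r i) * (star (a i) * a i) * r i :=
          star_mul_self_sum_conjugate_le a r hr
      _ ≤ ∑ i, star (r i) * 1 * r i := sum_le_sum fun i _ =>
          star_left_conjugate_le_conjugate (star_mul_self_le_one_of_norm_le_one (ha i)) _
      _ = 1 := by simpa using hr
  rw [← CStarAlgebra.norm_le_one_iff_of_nonneg _ (star_mul_self_nonneg c),
    CStarRing.norm_star_mul_self] at hc
  nlinarith [norm_nonneg c]

lemma isStrictlyPositive_sum_star_mul_self {t : ι → A} (i : ι) (ht : IsUnit (t i)) :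
    IsStrictlyPositive (∑ j, star (t j) * t j) :=
  (CStarAlgebra.isStrictlyPositive_iff_eq_star_mul_self.mpr ⟨t i, ht, rfl⟩).of_le <|
    single_le_sum (f := fun j => star (t j) * t j) (fun _ _ => star_mul_self_nonneg _) (mem_univ i)

lemma exists_units_sum_star_mul_mul_eq [Nonempty ι] {t : ι → A} (ht : ∀ i, IsUnit (t i)) :
    ∃ (s : Aˣ) (r : ι → A), (∀ i, IsUnit (r i)) ∧ ∑ i, star (r i) * r i = 1 ∧
      ∀ b : ι → A,
        ∑ i, star (t i) * b i * t i = star (s : A) * (∑ i, star (r i) * b i * r i) * s := by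
  obtain ⟨i₀⟩ := ‹Nonempty ι›
  obtain ⟨_, ⟨s, rfl⟩, hs⟩ := CStarAlgebra.isStrictlyPositive_iff_eq_star_mul_self.mp
    (isStrictlyPositive_sum_star_mul_self i₀ (ht i₀))
  have htr : ∀ i, t i = t i * ↑s⁻¹ * s := fun i => by simp [mul_assoc]
  refine ⟨s, fun i => t i * ↑s⁻¹, fun i => ?_, ?_, fun b => ?_⟩
  · exact (Units.isUnit_mul_units _ _).mpr (ht i)
  · rw [sum_star_mul_self_mul_right, hs, mul_assoc, mul_assoc, Units.mul_inv, mul_one,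
      ← star_mul, Units.mul_inv, star_one]
  · conv_lhs => rw [sum_congr rfl fun i _ => by rw [htr i]]
    exact sum_star_mul_mul_mul_right b _ s

end CStarAlgebra

theorem cstarExtreme_of_two_sums_general {A : Type*} [NormedRing A] [StarRing A]
    [CStarRing A] [NormedAlgebra ℂ A] [CompleteSpace A] [StarModule ℂ A]
    (x : A)
    (h2 : ∀ a₁ a₂ t₁ t₂ : A, ‖a₁‖ ≤ 1 → ‖a₂‖ ≤ 1 → IsUnit t₁ → IsUnit t₂ →
      star t₁ * t₁ + star t₂ * t₂ = 1 →
      x = star t₁ * a₁ * t₁ + star t₂ * a₂ * t₂ →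
      (∃ u : A, star u * u = 1 ∧ u * star u = 1 ∧ a₁ = star u * x * u) ∧
      (∃ u : A, star u * u = 1 ∧ u * star u = 1 ∧ a₂ = star u * x * u)) :
    ∀ (k : ℕ) (a t : Fin k → A), (∀ i, ‖a i‖ ≤ 1) → (∀ i, IsUnit (t i)) →
      (∑ i, star (t i) * t i) = 1 → x = ∑ i, star (t i) * a i * t i →
      ∀ i, ∃ u : A, star u * u = 1 ∧ u * star u = 1 ∧ a i = star u * x * u := by
  let : CStarAlgebra A := { }
  let := CStarAlgebra.spectralOrder A
  have := CStarAlgebra.spectralOrderedRing A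
  intro k
  induction k with
  | zero => exact fun _ _ _ _ _ _ i => i.elim0
  | succ n ih =>
    intro a t ha ht hsum hxa
    rcases n with _ | m
    · rw [Fin.sum_univ_one] at hsum hxa
      exact Fin.forall_fin_one.2 (exists_unitary_eq_star_mul_mul (ht 0) hsum hxa)
    obtain ⟨s, r, hr, hrsum, hconj⟩ :=
      exists_units_sum_star_mul_mul_eq fun j : Fin (m + 1) => ht j.succ
    have hs : ∑ j : Fin (m + 1), star (t j.succ) * t j.succ = star (s : A) * s := by
      simpa [hrsum] using hconj 1
    rw [Fin.sum_univ_succ, hs] at hsum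
    rw [Fin.sum_univ_succ, hconj] at hxa
    obtain ⟨h0, v, hv₁, hv₂, hb⟩ := h2 _ _ _ _ (ha 0)
      (norm_sum_star_mul_mul_le_one (fun j => ha j.succ) hrsum) (ht 0) s.isUnit hsum hxa
    have hvu : IsUnit (star v) := isUnit_iff_exists.mpr ⟨v, hv₁, hv₂⟩
    refine Fin.cases h0 (ih _ (fun j => r j * star v) (fun j => ha j.succ)
      (fun j => (hr j).mul hvu) ?_ ?_)
    · rw [sum_star_mul_self_mul_right, hrsum, mul_one, star_star, hv₂]
    · rw [sum_star_mul_mul_mul_right, star_star]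
      exact eq_mul_mul_star_of_eq_star_mul_mul hv₂ hb

/-- If every proper C*-convex decomposition of `x` into two summands has both
components unitarily equivalent to `x`, then `x` is a C*-extreme point of the
closed unit ball: the same holds for decompositions with any number of summands. -/
theorem cstarExtreme_of_two_sums {A : Type*} [NormedRing A] [StarRing A]
    [CStarRing A] [NormedAlgebra ℂ A] [CompleteSpace A] [StarModule ℂ A]
    (x : A) (hx : ‖x‖ ≤ 1)
    (h2 : ∀ a₁ a₂ t₁ t₂ : A, ‖a₁‖ ≤ 1 → ‖a₂‖ ≤ 1 → IsUnit t₁ → IsUnit t₂ →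
      star t₁ * t₁ + star t₂ * t₂ = 1 →
      x = star t₁ * a₁ * t₁ + star t₂ * a₂ * t₂ →
      (∃ u : A, star u * u = 1 ∧ u * star u = 1 ∧ a₁ = star u * x * u) ∧
      (∃ u : A, star u * u = 1 ∧ u * star u = 1 ∧ a₂ = star u * x * u)) :
    ∀ (k : ℕ) (a t : Fin k → A), (∀ i, ‖a i‖ ≤ 1) → (∀ i, IsUnit (t i)) →
      (∑ i, star (t i) * t i) = 1 → x = ∑ i, star (t i) * a i * t i →
      ∀ i, ∃ u : A, star u * u = 1 ∧ u * star u = 1 ∧ a i = star u * x * u :=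
  cstarExtreme_of_two_sums_general x h2
end

section
/- Let X be a uniformly convex Banach space and T : X → X a linear isometry with ‖T‖ ≤ 1. Then T is a strongly extreme point of the closed unit ball of B(X): for any sequences Rₙ, Sₙ in the unit ball of B(X) with (Rₙ + Sₙ)/2 → T in operator norm, ‖Rₙ - Sₙ‖ → 0. -/
open Filter Topology in
/-- An isometry on a uniformly convex Banach space is a strongly extreme point of
the closed unit ball of `B(X)`. -/
theorem isometry_strongly_extreme {X : Type*} [NormedAddCommGroup X] [NormedSpace ℝ X]
    [CompleteSpace X] [UniformConvexSpace X]
    (T : X →L[ℝ] X) (hT : ∀ ξ : X, ‖T ξ‖ = ‖ξ‖)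
    (R S : ℕ → X →L[ℝ] X) (hR : ∀ n, ‖R n‖ ≤ 1) (hS : ∀ n, ‖S n‖ ≤ 1)
    (hconv : Tendsto (fun n => (2⁻¹ : ℝ) • (R n + S n)) atTop (𝓝 T)) :
    Tendsto (fun n => ‖R n - S n‖) atTop (𝓝 0) := by
  rw [Metric.tendsto_atTop]
  intro ε hε
  obtain ⟨δ, hδ, hball⟩ := exists_forall_closed_ball_dist_add_le_two_sub X
    (show (0:ℝ) < ε / 2 by positivity)
  rw [Metric.tendsto_atTop] at hconv
  obtain ⟨N, hN⟩ := hconv (δ / 2) (by positivity)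
  refine ⟨N, fun n hn => ?_⟩
  have h1 := hN n hn
  rw [dist_eq_norm] at h1
  rw [Real.dist_eq, sub_zero, abs_of_nonneg (norm_nonneg _)]
  by_contra hcon
  push_neg at hcon
  have hlt : ε / 2 < ‖R n - S n‖ := lt_of_lt_of_le (by linarith) hcon
  obtain ⟨ξ, hξ1, hξ2⟩ := (R n - S n).exists_lt_apply_of_lt_opNorm hlt
  have hξ0 : ξ ≠ 0 := by
    rintro rfl
    simp at hξ2
    linarith
  set u : X := ‖ξ‖⁻¹ • ξ with hu
  have hnξ : (0:ℝ) < ‖ξ‖ := norm_pos_iff.mpr hξ0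
  have hun : ‖u‖ = 1 := by
    rw [hu, norm_smul, norm_inv, norm_norm, inv_mul_cancel₀ (ne_of_gt hnξ)]
  have hfu : ε / 2 ≤ ‖(R n - S n) u‖ := by
    rw [hu, map_smul, norm_smul, norm_inv, norm_norm]
    calc ε / 2 = ‖ξ‖⁻¹ * (ε / 2 * ‖ξ‖) := by field_simp
    _ ≤ ‖ξ‖⁻¹ * ‖(R n - S n) ξ‖ := by
        gcongr
        have : ε / 2 * ‖ξ‖ ≤ ε / 2 := mul_le_of_le_one_right (by positivity) hξ1.le
        linarith
  have hRu : ‖R n u‖ ≤ 1 := le_trans ((R n).unit_le_opNorm u hun.le) (hR n)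
  have hSu : ‖S n u‖ ≤ 1 := le_trans ((S n).unit_le_opNorm u hun.le) (hS n)
  have hdiff : ε / 2 ≤ ‖R n u - S n u‖ := by
    simpa using hfu
  have hsum : ‖R n u + S n u‖ ≤ 2 - δ := hball hRu hSu hdiff
  -- On the other hand, (R n + S n) u is close to 2 • T u which has norm 2
  have happ : ‖((2:ℝ)⁻¹ • (R n + S n) - T) u‖ < δ / 2 := by
    calc ‖((2:ℝ)⁻¹ • (R n + S n) - T) u‖ ≤ ‖(2:ℝ)⁻¹ • (R n + S n) - T‖ * ‖u‖ :=
      ContinuousLinearMap.le_opNorm _ u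
    _ = ‖(2:ℝ)⁻¹ • (R n + S n) - T‖ := by rw [hun, mul_one]
    _ < δ / 2 := h1
  have hTu : ‖T u‖ = 1 := by rw [hT, hun]
  have hlow : 1 - δ / 2 < ‖(2:ℝ)⁻¹ • (R n u + S n u)‖ := by
    have : ‖T u‖ - ‖(2:ℝ)⁻¹ • (R n u + S n u)‖ ≤ ‖((2:ℝ)⁻¹ • (R n + S n) - T) u‖ := by
      have : ((2:ℝ)⁻¹ • (R n + S n) - T) u = (2:ℝ)⁻¹ • (R n u + S n u) - T u := by
        simp
      rw [this]
      have := norm_sub_norm_le ((2:ℝ)⁻¹ • (R n u + S n u) - T u + T u)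
        ((2:ℝ)⁻¹ • (R n u + S n u))
      simp at this
      linarith [abs_le.mp (abs_norm_sub_norm_le ((2:ℝ)⁻¹ • (R n u + S n u)) (T u))]
    rw [hTu] at this
    linarith
  have : ‖(2:ℝ)⁻¹ • (R n u + S n u)‖ = 2⁻¹ * ‖R n u + S n u‖ := by
    rw [norm_smul]; norm_num
  rw [this] at hlow
  linarith
end

section
/- Let A, B be unital C*-algebras and C = A ⊕ B their ℓ∞ direct sum. Then (a, b) is a C*-extreme point of the closed unit ball of C if and only if a is a C*-extreme point of the closed unit ball of A and b is a C*-extreme point of the closed unit ball of B. -/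
/-!
Both the norm and the algebraic operations of `A × B` are componentwise, so a C*-convex
decomposition of `(a, b)` is exactly a pair of decompositions of `a` and `b` of the same length,
and a unitary of `A × B` is a pair of unitaries. The only point is that a decomposition of `a`
alone must be completed to one of `(a, b)`: take `b` itself `k` times, with the scalar weights
`t i = k^(-1/2)`.
-/

/-- `x` is a C*-extreme point of the closed unit ball of `D`. -/
def IsCStarExtremePt {D : Type*} [NormedRing D] [StarRing D] (x : D) : Prop :=
  ‖x‖ ≤ 1 ∧
    ∀ (k : ℕ) (a t : Fin k → D), (∀ i, ‖a i‖ ≤ 1) → (∀ i, IsUnit (t i)) →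
      (∑ i, star (t i) * t i) = 1 → x = ∑ i, star (t i) * a i * t i →
      ∀ i, ∃ u : D, star u * u = 1 ∧ u * star u = 1 ∧ a i = star u * x * u

open Finset

def IsCStarConvexDecomp {D : Type*} [NormedRing D] [StarRing D] (x : D) {k : ℕ}
    (a t : Fin k → D) : Prop :=
  (∀ i, ‖a i‖ ≤ 1) ∧ (∀ i, IsUnit (t i)) ∧
    (∑ i, star (t i) * t i) = 1 ∧ x = ∑ i, star (t i) * a i * t i

def IsUnitarilyEquiv {D : Type*} [Monoid D] [StarMul D] (x y : D) : Prop :=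
  ∃ u ∈ unitary D, y = star u * x * u

theorem isCStarExtremePt_iff {D : Type*} [NormedRing D] [StarRing D] {x : D} :
    IsCStarExtremePt x ↔ ‖x‖ ≤ 1 ∧ ∀ (k : ℕ) (a t : Fin k → D),
      IsCStarConvexDecomp x a t → ∀ i, IsUnitarilyEquiv x (a i) := by
  refine and_congr_right fun _ => ?_
  constructor
  · rintro h k a t ⟨ha, ht, hsum, hx⟩ i
    obtain ⟨u, hu₁, hu₂, hu⟩ := h k a t ha ht hsum hx i
    exact ⟨u, ⟨hu₁, hu₂⟩, hu⟩
  · intro h k a t ha ht hsum hx i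
    obtain ⟨u, ⟨hu₁, hu₂⟩, hu⟩ := h k a t ⟨ha, ht, hsum, hx⟩ i
    exact ⟨u, hu₁, hu₂, hu⟩

theorem isUnitarilyEquiv_prod_iff {A B : Type*} [Monoid A] [StarMul A] [Monoid B] [StarMul B]
    {x x' : A} {y y' : B} :
    IsUnitarilyEquiv (x, y) (x', y') ↔ IsUnitarilyEquiv x x' ∧ IsUnitarilyEquiv y y' := by
  constructor
  · rintro ⟨u, ⟨hu₁, hu₂⟩, hu⟩
    exact ⟨⟨u.1, ⟨congrArg Prod.fst hu₁, congrArg Prod.fst hu₂⟩, congrArg Prod.fst hu⟩,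
      ⟨u.2, ⟨congrArg Prod.snd hu₁, congrArg Prod.snd hu₂⟩, congrArg Prod.snd hu⟩⟩
  · rintro ⟨⟨u, ⟨hu₁, hu₂⟩, hu⟩, ⟨v, ⟨hv₁, hv₂⟩, hv⟩⟩
    exact ⟨(u, v), ⟨Prod.ext hu₁ hv₁, Prod.ext hu₂ hv₂⟩, Prod.ext hu hv⟩

namespace IsCStarConvexDecomp

variable {A B : Type*} [NormedRing A] [StarRing A] [NormedRing B] [StarRing B] {k : ℕ}

theorem prod_iff {x : A} {y : B} {a t : Fin k → A} {b s : Fin k → B} :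
    IsCStarConvexDecomp (x, y) (fun i => (a i, b i)) (fun i => (t i, s i)) ↔
      IsCStarConvexDecomp x a t ∧ IsCStarConvexDecomp y b s := by
  simp only [IsCStarConvexDecomp, norm_prod_le_iff, Prod.isUnit_iff, Prod.ext_iff, Prod.fst_sum,
    Prod.snd_sum, Prod.fst_mul, Prod.snd_mul, Prod.fst_star, Prod.snd_star, Prod.fst_one,
    Prod.snd_one, forall_and]
  tauto

theorem const {D : Type*} [NormedRing D] [StarRing D] [Algebra ℝ D] [StarModule ℝ D]
    {x : D} (hx : ‖x‖ ≤ 1) (hk : k ≠ 0) :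
    IsCStarConvexDecomp x (fun _ : Fin k => x) (fun _ => algebraMap ℝ D (√k)⁻¹) := by
  set s := algebraMap ℝ D (√k)⁻¹
  have hk' : (0 : ℝ) < k := by exact_mod_cast Nat.pos_of_ne_zero hk
  have hs_star : star s = s := by rw [← algebraMap_star_comm, star_trivial]
  have hk_ss : (k : ℝ) • (s * s) = 1 := by
    rw [← map_mul, Algebra.smul_def, ← map_mul, ← mul_inv, Real.mul_self_sqrt hk'.le,
      mul_inv_cancel₀ hk'.ne', map_one]
  have hsum : ∀ z : D, ∑ _i : Fin k, star s * z * s = z := fun z => by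
    rw [sum_const, card_univ, Fintype.card_fin, hs_star, mul_assoc, ← Algebra.commutes,
      ← mul_assoc, ← Nat.cast_smul_eq_nsmul ℝ, ← smul_mul_assoc, hk_ss, one_mul]
  exact ⟨fun _ => hx, fun _ => (isUnit_iff_ne_zero.2 (inv_pos.2 (Real.sqrt_pos.2 hk')).ne').map _,
    by simpa using hsum 1, (hsum x).symm⟩

end IsCStarConvexDecomp

namespace IsCStarExtremePt

variable {A B : Type*} [NormedRing A] [StarRing A] [NormedRing B] [StarRing B] {a : A} {b : B}

theorem fst [Algebra ℝ B] [StarModule ℝ B] (h : IsCStarExtremePt (a, b)) :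
    IsCStarExtremePt a := by
  rw [isCStarExtremePt_iff, norm_prod_le_iff] at h
  obtain ⟨⟨ha, hb⟩, hext⟩ := h
  refine isCStarExtremePt_iff.2 ⟨ha, fun k x t hdecomp i => ?_⟩
  have hbdecomp := IsCStarConvexDecomp.const hb (Fin.pos i).ne'
  exact (isUnitarilyEquiv_prod_iff.1 (hext k (fun j => (x j, b)) _
    (IsCStarConvexDecomp.prod_iff.2 ⟨hdecomp, hbdecomp⟩) i)).1

theorem snd [Algebra ℝ A] [StarModule ℝ A] (h : IsCStarExtremePt (a, b)) :
    IsCStarExtremePt b := by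
  rw [isCStarExtremePt_iff, norm_prod_le_iff] at h
  obtain ⟨⟨ha, hb⟩, hext⟩ := h
  refine isCStarExtremePt_iff.2 ⟨hb, fun k y s hdecomp i => ?_⟩
  have hadecomp := IsCStarConvexDecomp.const ha (Fin.pos i).ne'
  exact (isUnitarilyEquiv_prod_iff.1 (hext k (fun j => (a, y j)) _
    (IsCStarConvexDecomp.prod_iff.2 ⟨hadecomp, hdecomp⟩) i)).2

theorem prod (ha : IsCStarExtremePt a) (hb : IsCStarExtremePt b) :
    IsCStarExtremePt (a, b) := by
  rw [isCStarExtremePt_iff] at ha hb ⊢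
  refine ⟨norm_prod_le_iff.2 ⟨ha.1, hb.1⟩, fun k x t hdecomp i => ?_⟩
  obtain ⟨hdecompA, hdecompB⟩ := IsCStarConvexDecomp.prod_iff.1 hdecomp
  exact isUnitarilyEquiv_prod_iff.2 ⟨ha.2 k _ _ hdecompA i, hb.2 k _ _ hdecompB i⟩

end IsCStarExtremePt

theorem cstarExtreme_prod_iff_general {A B : Type*}
    [NormedRing A] [StarRing A] [NormedAlgebra ℂ A]
    [StarModule ℂ A]
    [NormedRing B] [StarRing B] [NormedAlgebra ℂ B]
    [StarModule ℂ B] (a : A) (b : B) :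
    IsCStarExtremePt ((a, b) : A × B) ↔ IsCStarExtremePt a ∧ IsCStarExtremePt b :=
  ⟨fun h => ⟨h.fst, h.snd⟩, fun h => h.1.prod h.2⟩

/-- In the ℓ∞-direct sum `C = A ⊕ B` of two unital C*-algebras, `(a, b)` is a
C*-extreme point of the closed unit ball of `C` iff `a` is a C*-extreme point of
the closed unit ball of `A` and `b` is one for `B`. -/
theorem cstarExtreme_prod_iff {A B : Type*}
    [NormedRing A] [StarRing A] [CStarRing A] [NormedAlgebra ℂ A] [CompleteSpace A]
    [StarModule ℂ A]
    [NormedRing B] [StarRing B] [CStarRing B] [NormedAlgebra ℂ B] [CompleteSpace B]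
    [StarModule ℂ B] (a : A) (b : B) :
    IsCStarExtremePt ((a, b) : A × B) ↔ IsCStarExtremePt a ∧ IsCStarExtremePt b :=
  cstarExtreme_prod_iff_general a b
end
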